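/- arXiv:1210.7269 — 5 statements merged into one kernel-verified Lean document; each statement's English description precedes it below -/
import Mathlib

section
/- Let G be a graph with a list assignment L, and let v, w be twin vertices of G (i.e., N[v] = N[w]). Then ρ(v) ≠ ρ(w) for every star L-coloring of G and for every biclique L-coloring of G. -/
variable {V : Type*}

/-- A set of vertices is monochromatic under the coloring `ρ`. -/
def Mono (ρ : V → ℕ) (W : Set V) : Prop := ∀ x ∈ W, ∀ y ∈ W, ρ x = ρ y

/-- `S` is an independent set of `G`. -/
def IndepSet (G : SimpleGraph V) (S : Set V) : Prop := ∀ x ∈ S, ∀ y ∈ S, ¬G.Adj x y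

/-- `W` is a star of `G` with center `v` (it induces a `K_{1,m}` with `m ≥ 1`). -/
def IsStarC (G : SimpleGraph V) (v : V) (W : Set V) : Prop :=
  v ∈ W ∧ (W \ {v}).Nonempty ∧ (∀ u ∈ W \ {v}, G.Adj v u) ∧ IndepSet G (W \ {v})

/-- `W` is a star of `G`. -/
def IsStar (G : SimpleGraph V) (W : Set V) : Prop := ∃ v, IsStarC G v W

/-- `W` is a maximal star of `G`. -/
def IsMaxStar (G : SimpleGraph V) (W : Set V) : Prop :=
  IsStar G W ∧ ∀ W', IsStar G W' → W ⊆ W' → W' = W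

/-- `W` is a biclique of `G` (it induces a complete bipartite graph). -/
def IsBiclique (G : SimpleGraph V) (W : Set V) : Prop :=
  ∃ S T : Set V, S.Nonempty ∧ T.Nonempty ∧ Disjoint S T ∧ S ∪ T = W ∧
    (∀ s ∈ S, ∀ t ∈ T, G.Adj s t) ∧ IndepSet G S ∧ IndepSet G T

/-- `W` is a maximal biclique of `G`. -/
def IsMaxBiclique (G : SimpleGraph V) (W : Set V) : Prop :=
  IsBiclique G W ∧ ∀ W', IsBiclique G W' → W ⊆ W' → W' = W

/-- A star coloring: no maximal star is monochromatic. -/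
def StarColoring (G : SimpleGraph V) (ρ : V → ℕ) : Prop :=
  ∀ W, IsMaxStar G W → ¬Mono ρ W

/-- A biclique coloring: no maximal biclique is monochromatic. -/
def BicliqueColoring (G : SimpleGraph V) (ρ : V → ℕ) : Prop :=
  ∀ W, IsMaxBiclique G W → ¬Mono ρ W

/-- A star `k`-coloring uses colors `{1, …, k}`. -/
def StarKColoring (G : SimpleGraph V) (k : ℕ) (ρ : V → ℕ) : Prop :=
  (∀ x, ρ x ∈ Set.Icc 1 k) ∧ StarColoring G ρ

/-- A biclique `k`-coloring uses colors `{1, …, k}`. -/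
def BicliqueKColoring (G : SimpleGraph V) (k : ℕ) (ρ : V → ℕ) : Prop :=
  (∀ x, ρ x ∈ Set.Icc 1 k) ∧ BicliqueColoring G ρ

/-- A `k`-list assignment: each vertex gets a list of exactly `k` colors. -/
def IsListAssignment (L : V → Set ℕ) (k : ℕ) : Prop := ∀ v, (L v).Finite ∧ (L v).ncard = k

/-- An `L`-coloring: each vertex gets a color from its own list. -/
def IsLColoring (L : V → Set ℕ) (ρ : V → ℕ) : Prop := ∀ v, ρ v ∈ L v

/-- `G` is star `k`-choosable. -/
def StarChoosable (G : SimpleGraph V) (k : ℕ) : Prop :=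
  ∀ L : V → Set ℕ, IsListAssignment L k → ∃ ρ, IsLColoring L ρ ∧ StarColoring G ρ

/-- `G` is biclique `k`-choosable. -/
def BicliqueChoosable (G : SimpleGraph V) (k : ℕ) : Prop :=
  ∀ L : V → Set ℕ, IsListAssignment L k → ∃ ρ, IsLColoring L ρ ∧ BicliqueColoring G ρ

/-- The star chromatic number `χ_S`. -/
noncomputable def starChromaticNumber (G : SimpleGraph V) : ℕ :=
  sInf {k | ∃ ρ, StarKColoring G k ρ}

/-- The biclique chromatic number `χ_B`. -/
noncomputable def bicliqueChromaticNumber (G : SimpleGraph V) : ℕ :=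
  sInf {k | ∃ ρ, BicliqueKColoring G k ρ}

/-- The star choice number `ch_S`. -/
noncomputable def starChoiceNumber (G : SimpleGraph V) : ℕ := sInf {k | StarChoosable G k}

/-- The biclique choice number `ch_B`. -/
noncomputable def bicliqueChoiceNumber (G : SimpleGraph V) : ℕ := sInf {k | BicliqueChoosable G k}

/-- `l` is a leaf (degree-one vertex) whose unique neighbor is `v`. -/
def IsLeafAt (G : SimpleGraph V) (l v : V) : Prop := G.neighborSet l = {v}

/-- `v` is a leafed vertex: some leaf is adjacent to it. -/
def IsLeafed (G : SimpleGraph V) (v : V) : Prop := ∃ l, IsLeafAt G l v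

/-- `S` induces a cycle `C_n` in `G`. -/
def IsInducedCycle (G : SimpleGraph V) (n : ℕ) (S : Set V) : Prop :=
  ∃ f : ZMod n → V, Function.Injective f ∧ Set.range f = S ∧
    ∀ i j : ZMod n, G.Adj (f i) (f j) ↔ (j = i + 1 ∨ i = j + 1)

/-- `S` induces a hole (chordless cycle of length at least 4) in `G`. -/
def IsHole (G : SimpleGraph V) (S : Set V) : Prop := ∃ n, 4 ≤ n ∧ IsInducedCycle G n S

/-- `S` induces a complete graph `K_m` in `G`. -/
def IsInducedComplete (G : SimpleGraph V) (m : ℕ) (S : Set V) : Prop :=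
  G.IsClique S ∧ S.Finite ∧ S.ncard = m

/-- The closed neighborhood `N[v]`. -/
def closedNbhd (G : SimpleGraph V) (v : V) : Set V := insert v (G.neighborSet v)

/-- `v` and `w` are twins: `N[v] = N[w]`. -/
def Twins (G : SimpleGraph V) (v w : V) : Prop := closedNbhd G v = closedNbhd G w

/-- `w` and `z` are twins in the subgraph of `G` induced by `A`. -/
def TwinsIn (G : SimpleGraph V) (A : Set V) (w z : V) : Prop :=
  ∀ y ∈ A, ((y = w ∨ G.Adj y w) ↔ (y = z ∨ G.Adj y z))

/-- `w` dominates `v`: `N[v] ⊆ N[w]`. -/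
def Dominates (G : SimpleGraph V) (w v : V) : Prop := closedNbhd G v ⊆ closedNbhd G w

/-- `K` is a `k`-keeper connecting `v` and `w`. -/
def IsKeeper (G : SimpleGraph V) (k : ℕ) (v w : V) (K : Set V) : Prop :=
  v ∉ K ∧ w ∉ K ∧
  ∃ (d : Fin (k - 1) → V) (C : Fin (k - 1) → Set V),
    Function.Injective d ∧
    (∀ i, (C i).Finite ∧ (C i).ncard = k) ∧
    (∀ i j, d i ∉ C j) ∧
    (∀ i j, i ≠ j → Disjoint (C i) (C j)) ∧
    K = Set.range d ∪ ⋃ i, C i ∧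
    G.IsClique (Set.range d ∪ {v, w}) ∧
    (∀ i, G.IsClique (insert (d i) (C i))) ∧
    (∀ x ∈ K, ∀ y, G.Adj x y →
      (x ∈ Set.range d ∧ y ∈ Set.range d ∪ {v, w}) ∨
      (∃ i, x ∈ insert (d i) (C i) ∧ y ∈ insert (d i) (C i)))

/-- `C` is a `k`-switcher connecting `U`. -/
def IsSwitcher (G : SimpleGraph V) (k : ℕ) (U C : Set V) : Prop :=
  Disjoint C U ∧ C.Finite ∧ C.ncard = k ∧
  (∀ u ∈ U, G.IsClique (insert u C)) ∧
  (∀ x ∈ C, ∀ y, G.Adj x y → y ∈ C ∪ U)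

/-- `S` is a long `k`-switcher connecting `W`. -/
def IsLongSwitcher (G : SimpleGraph V) (k : ℕ) (W S : Set V) : Prop :=
  ∃ (h : ℕ) (w u : ℕ → V) (C : Set V) (Q : ℕ → Set V),
    2 ≤ h ∧
    Set.InjOn w (Set.Icc 1 h) ∧ w '' Set.Icc 1 h = W ∧
    Set.InjOn u (Set.Icc 1 h) ∧
    (∀ i ∈ Set.Icc 1 h, IsLeafed G (u i)) ∧
    IndepSet G (u '' Set.Icc 1 h) ∧
    IsSwitcher G k (u '' Set.Icc 1 h) C ∧
    (∀ i ∈ Set.Icc 1 h, IsKeeper G k (w i) (u i) (Q i)) ∧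
    S = u '' Set.Icc 1 h ∪ C ∪ ⋃ i ∈ Set.Icc 1 h, Q i ∧
    Disjoint (u '' Set.Icc 1 h) C ∧
    (∀ i ∈ Set.Icc 1 h, Disjoint (u '' Set.Icc 1 h) (Q i)) ∧
    (∀ i ∈ Set.Icc 1 h, Disjoint C (Q i)) ∧
    (∀ i ∈ Set.Icc 1 h, ∀ j ∈ Set.Icc 1 h, i ≠ j → Disjoint (Q i) (Q j)) ∧
    Disjoint S W ∧
    (∀ i ∈ Set.Icc 1 h, ∀ y, G.Adj (u i) y → y ∈ C ∪ Q i ∨ IsLeafAt G y (u i))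

/-- `K` is an `ℓ`-cluster connecting `⟨s, X, −X⟩`, where `X = range x` and `−X = range mx`. -/
def IsCluster (G : SimpleGraph V) (ℓ : ℕ) (s : V) (x mx : ZMod ℓ → V) (K : Set V) : Prop :=
  2 ≤ ℓ ∧
  ∃ vc : ZMod ℓ → V,
    Function.Injective x ∧ Function.Injective mx ∧ Function.Injective vc ∧
    Set.range vc = K ∧
    Disjoint (Set.range x) (Set.range mx) ∧
    Disjoint (Set.range x) K ∧ Disjoint (Set.range mx) K ∧
    s ∉ Set.range x ∪ Set.range mx ∪ K ∧
    (∀ i, IsLeafed G (vc i)) ∧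
    (∀ i, G.Adj s (x i)) ∧ (∀ i, G.Adj s (mx i)) ∧ (∀ i, G.Adj s (vc i)) ∧
    (∀ i, G.Adj (x i) (mx i)) ∧ (∀ i, G.Adj (mx i) (vc i)) ∧ (∀ i, G.Adj (vc i) (x (i + 1))) ∧
    (∀ i j, ¬G.Adj (x i) (x j)) ∧ (∀ i j, ¬G.Adj (mx i) (mx j)) ∧
    (∀ i j, ¬G.Adj (vc i) (vc j)) ∧
    (∀ i j, G.Adj (x i) (mx j) → i = j) ∧
    (∀ i j, G.Adj (mx i) (vc j) → i = j) ∧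
    (∀ i j, G.Adj (vc i) (x j) → j = i + 1) ∧
    (∀ i, ∀ y, G.Adj (vc i) y → y = s ∨ y = mx i ∨ y = x (i + 1) ∨ IsLeafAt G y (vc i))

/-- `S` is a list switcher connecting `W`. -/
def IsListSwitcher (G : SimpleGraph V) (W S : Set V) : Prop :=
  ∃ (h : ℕ) (w u : ℕ → V) (C : Set V),
    2 ≤ h ∧
    Set.InjOn w (Set.Icc 1 h) ∧ w '' Set.Icc 1 h = W ∧
    Set.InjOn u (Set.Icc 1 h) ∧
    IndepSet G (u '' Set.Icc 1 h) ∧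
    IsSwitcher G 2 (u '' Set.Icc 1 h) C ∧
    S = u '' Set.Icc 1 h ∪ C ∧
    Disjoint (u '' Set.Icc 1 h) C ∧
    Disjoint S W ∧
    (∀ i ∈ Set.Icc 1 h, G.Adj (w i) (u i)) ∧
    (∀ i ∈ Set.Icc 1 h, ∀ y, G.Adj (u i) y → y ∈ C ∨ y = w i)

/-- `F` is a `k`-forcer connecting `v`. -/
def IsForcer (G : SimpleGraph V) (k : ℕ) (v : V) (F : Set V) : Prop :=
  ∃ (A B : Set V) (C : V → V → Set V),
    A.Finite ∧ A.ncard = k - 1 ∧ B.Finite ∧ B.ncard = k ^ k - 1 ∧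
    (∀ a ∈ A, IsLeafed G a) ∧ (∀ b ∈ B, IsLeafed G b) ∧
    v ∉ A ∧ v ∉ B ∧ Disjoint A B ∧
    (∀ a ∈ insert v A, ∀ b ∈ B, ¬G.Adj a b ∧ IsSwitcher G k {a, b} (C a b)) ∧
    (∀ a ∈ insert v A, ∀ b ∈ B, ∀ a' ∈ insert v A, ∀ b' ∈ B,
      (a ≠ a' ∨ b ≠ b') → Disjoint (C a b) (C a' b')) ∧
    (∀ a ∈ insert v A, ∀ b ∈ B, Disjoint (C a b) (insert v (A ∪ B))) ∧
    F = A ∪ B ∪ ⋃ a ∈ insert v A, ⋃ b ∈ B, C a b ∧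
    (∀ x ∈ A ∪ B, ∀ y, G.Adj x y →
      (∃ a ∈ insert v A, ∃ b ∈ B, (x = a ∨ x = b) ∧ y ∈ C a b) ∨ IsLeafAt G y x)

/-- Given a `k`-forcer `F` connecting `v` and a list assignment `L`, the color `c` is
`L`-admissible for `v`. -/
def LAdmissible (G : SimpleGraph V) (F : Set V) (L : V → Set ℕ) (v : V) (c : ℕ) : Prop :=
  c ∈ L v ∧ ∃ ρ : V → ℕ, IsLColoring L ρ ∧ ρ v = c ∧
    ∀ f ∈ F, ∀ W, IsMaxStar G W → IsStarC G f W → ¬Mono ρ W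

/-- The vertices `a, b, c, d` induce a diamond with universal vertices `a, b`. -/
def IsInducedDiamond (G : SimpleGraph V) (a b c d : V) : Prop :=
  a ≠ b ∧ a ≠ c ∧ a ≠ d ∧ b ≠ c ∧ b ≠ d ∧ c ≠ d ∧
  G.Adj a b ∧ G.Adj a c ∧ G.Adj a d ∧ G.Adj b c ∧ G.Adj b d ∧ ¬G.Adj c d

/-- `G` contains an induced 4-wheel `W_4`. -/
def HasInducedW4 (G : SimpleGraph V) : Prop :=
  ∃ u a b c d : V, [u, a, b, c, d].Pairwise (· ≠ ·) ∧
    G.Adj u a ∧ G.Adj u b ∧ G.Adj u c ∧ G.Adj u d ∧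
    G.Adj a b ∧ G.Adj b c ∧ G.Adj c d ∧ G.Adj d a ∧ ¬G.Adj a c ∧ ¬G.Adj b d

/-- `G` contains an induced dart. -/
def HasInducedDart (G : SimpleGraph V) : Prop :=
  ∃ a b c d e : V, [a, b, c, d, e].Pairwise (· ≠ ·) ∧
    IsInducedDiamond G a b c d ∧ G.Adj a e ∧ ¬G.Adj b e ∧ ¬G.Adj c e ∧ ¬G.Adj d e

/-- `G` contains an induced gem. -/
def HasInducedGem (G : SimpleGraph V) : Prop :=
  ∃ u p₁ p₂ p₃ p₄ : V, [u, p₁, p₂, p₃, p₄].Pairwise (· ≠ ·) ∧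
    G.Adj u p₁ ∧ G.Adj u p₂ ∧ G.Adj u p₃ ∧ G.Adj u p₄ ∧
    G.Adj p₁ p₂ ∧ G.Adj p₂ p₃ ∧ G.Adj p₃ p₄ ∧ ¬G.Adj p₁ p₃ ∧ ¬G.Adj p₁ p₄ ∧ ¬G.Adj p₂ p₄

/-- `v` is block separable. -/
def BlockSeparable (G : SimpleGraph V) (v : V) : Prop :=
  ∀ w ∈ G.neighborSet v, ∀ z ∈ G.neighborSet v, G.Adj w z →
    ¬Dominates G w v → ¬Dominates G z v → TwinsIn G (closedNbhd G v) w z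

/-- `B` is a block (a maximal set of pairwise twins) of the subgraph of `G` induced by `A`. -/
def IsBlockOf (G : SimpleGraph V) (A B : Set V) : Prop :=
  B ⊆ A ∧ B.Nonempty ∧ (∀ p ∈ B, ∀ q ∈ B, TwinsIn G A p q) ∧
  ∀ B', B' ⊆ A → (∀ p ∈ B', ∀ q ∈ B', TwinsIn G A p q) → B ⊆ B' → B' = B

/-- `B` is a block of `G`. -/
def IsBlock (G : SimpleGraph V) (B : Set V) : Prop := IsBlockOf G Set.univ B

/-- `B 0, …, B ℓ` is the block separation of `v`. -/
def IsBlockSeparation (G : SimpleGraph V) (v : V) (ℓ : ℕ) (B : ℕ → Set V) : Prop :=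
  v ∈ B 0 ∧
  (∀ i ≤ ℓ, IsBlockOf G (closedNbhd G v) (B i)) ∧
  (∀ i ≤ ℓ, ∀ j ≤ ℓ, i ≠ j → Disjoint (B i) (B j)) ∧
  (⋃ i ∈ Set.Iic ℓ, B i) = closedNbhd G v ∧
  (∀ i, 1 ≤ i → i ≤ ℓ → ∀ j, 1 ≤ j → j ≤ ℓ → i ≠ j → ∀ a ∈ B i, ∀ b ∈ B j, ¬G.Adj a b)

/-- `S` is a diamond `k`-switcher connecting `U`. -/
def IsDiamondSwitcher (G : SimpleGraph V) (k : ℕ) (U S : Set V) : Prop :=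
  ∃ (h : ℕ) (u w : ℕ → V) (Q : ℕ → Set V) (C : Set V),
    2 ≤ h ∧
    Set.InjOn u (Set.Icc 1 h) ∧ u '' Set.Icc 1 h = U ∧
    Set.InjOn w (Set.Icc 1 h) ∧
    (∀ i, 2 ≤ i → i ≤ h → IsLeafed G (w i)) ∧
    C.Finite ∧ C.ncard = k ∧
    G.IsClique (insert (w 1) C) ∧
    (∀ i, 2 ≤ i → i ≤ h → G.Adj (w 1) (w i)) ∧
    (∀ i j, 2 ≤ i → i ≤ h → 2 ≤ j → j ≤ h → ¬G.Adj (w i) (w j)) ∧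
    (∀ i ∈ Set.Icc 1 h, IsKeeper G k (u i) (w i) (Q i)) ∧
    S = w '' Set.Icc 1 h ∪ C ∪ ⋃ i ∈ Set.Icc 1 h, Q i ∧
    Disjoint (w '' Set.Icc 1 h) C ∧
    (∀ i ∈ Set.Icc 1 h, Disjoint (w '' Set.Icc 1 h) (Q i)) ∧
    (∀ i ∈ Set.Icc 1 h, Disjoint C (Q i)) ∧
    (∀ i ∈ Set.Icc 1 h, ∀ j ∈ Set.Icc 1 h, i ≠ j → Disjoint (Q i) (Q j)) ∧
    Disjoint S U ∧
    (∀ y, G.Adj (w 1) y → y ∈ C ∨ (∃ i, 2 ≤ i ∧ i ≤ h ∧ y = w i) ∨ y ∈ Q 1) ∧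
    (∀ i, 2 ≤ i → i ≤ h → ∀ y, G.Adj (w i) y → y = w 1 ∨ y ∈ Q i ∨ IsLeafAt G y (w i)) ∧
    (∀ x ∈ C, ∀ y, G.Adj x y → y ∈ C ∨ y = w 1)

/-- `S` is a split `k`-switcher connecting `W`, with respect to the split partition
`(Sg, Qg)` of `G`. -/
def IsSplitSwitcher (G : SimpleGraph V) (Sg Qg : Set V) (k : ℕ) (W S : Set V) : Prop :=
  ∃ (X Y : Set V) (a₁ a₂ : V),
    X ⊆ Qg ∧ Y ⊆ Qg ∧ a₁ ∈ Sg ∧ a₂ ∈ Sg ∧ a₁ ≠ a₂ ∧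
    X.Finite ∧ X.ncard = k ∧ Y.Finite ∧ Y.ncard = k ∧ Disjoint X Y ∧
    a₁ ∉ X ∪ Y ∧ a₂ ∉ X ∪ Y ∧
    S = X ∪ Y ∪ {a₁, a₂} ∧ Disjoint S W ∧
    (∀ v ∈ W ∪ {a₁, a₂}, G.IsClique (insert v X)) ∧
    G.IsClique (insert a₁ Y) ∧ G.IsClique (insert a₂ Y) ∧
    (∀ x ∈ X ∪ Y, ∀ y ∈ Sg, G.Adj x y →
      ((x ∈ X ∧ (y ∈ W ∨ y = a₁ ∨ y = a₂)) ∨ (x ∈ Y ∧ (y = a₁ ∨ y = a₂)))) ∧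
    (∀ y, G.Adj a₁ y → y ∈ X ∪ Y) ∧
    (∀ y, G.Adj a₂ y → y ∈ X ∪ Y)

/-- `G` together with the vertex partition `QB 1, …, QB (r+1), SB 1, …, SB r` realizes the
threshold representation `(q, s)`. -/
def IsThresholdRealization (G : SimpleGraph V) (r : ℕ) (q s : ℕ → ℕ)
    (QB SB : ℕ → Set V) : Prop :=
  (∀ i ∈ Set.Icc 1 (r + 1), (QB i).Finite ∧ (QB i).ncard = q i) ∧
  (∀ i ∈ Set.Icc 1 r, (SB i).Finite ∧ (SB i).ncard = s i) ∧
  (∀ i ∈ Set.Icc 1 (r + 1), ∀ j ∈ Set.Icc 1 (r + 1), i ≠ j → Disjoint (QB i) (QB j)) ∧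
  (∀ i ∈ Set.Icc 1 r, ∀ j ∈ Set.Icc 1 r, i ≠ j → Disjoint (SB i) (SB j)) ∧
  (∀ i ∈ Set.Icc 1 (r + 1), ∀ j ∈ Set.Icc 1 r, Disjoint (QB i) (SB j)) ∧
  ((⋃ i ∈ Set.Icc 1 (r + 1), QB i) ∪ ⋃ i ∈ Set.Icc 1 r, SB i) = Set.univ ∧
  (∀ a b : V, G.Adj a b ↔ a ≠ b ∧
    ((∃ i ∈ Set.Icc 1 (r + 1), ∃ j ∈ Set.Icc 1 (r + 1),
        ((a ∈ QB i ∧ b ∈ QB j) ∨ (b ∈ QB i ∧ a ∈ QB j))) ∨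
     (∃ i ∈ Set.Icc 1 r, ∃ j ∈ Set.Icc 1 r, i ≤ j ∧
        ((a ∈ QB i ∧ b ∈ SB j) ∨ (b ∈ QB i ∧ a ∈ SB j)))))

/-- The index `i` of `Q` is `k`-forbidden for the threshold representation `(q, s)`. -/
def KForbiddenIndex (k r : ℕ) (q s : ℕ → ℕ) (i : ℕ) : Prop :=
  k < q i ∨ (q i = k ∧ ∃ j, i < j ∧ j ≤ r + 1 ∧ q j = k ∧
    (∀ h, i < h → h < j → q h = k - 1) ∧ ∀ h, i ≤ h → h < j → s h = 1)

/-- `G` realizes the netblock representation `(T, wt)`, where `VT` is the vertex set of the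
tree `T` and `B v w` is the clique inserted for the tree edge `vw`. -/
def IsNetblockRealization (G T : SimpleGraph V) (VT : Set V)
    (wt : V → V → ℕ) (B : V → V → Set V) : Prop :=
  (∀ v w, T.Adj v w → v ∈ VT ∧ w ∈ VT) ∧
  (T.induce VT).IsTree ∧
  (∀ v w, wt v w = wt w v) ∧
  (∀ v w, B v w = B w v) ∧
  (∀ v w, T.Adj v w → (B v w).Finite ∧ (B v w).ncard = wt v w) ∧
  (∀ v w, T.Adj v w → Disjoint (B v w) VT) ∧
  (∀ v w v' w', T.Adj v w → T.Adj v' w' → ¬(v = v' ∧ w = w') → ¬(v = w' ∧ w = v') →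
    Disjoint (B v w) (B v' w')) ∧
  {a | a ∈ VT ∨ ∃ v w, T.Adj v w ∧ a ∈ B v w} = Set.univ ∧
  (∀ a b, G.Adj a b ↔ a ≠ b ∧ ∃ v w, T.Adj v w ∧
    a ∈ insert v (insert w (B v w)) ∧ b ∈ insert v (insert w (B v w)))

/-- `R` is the vertex set of a `k`-subtree of the netblock representation `(T, wt)`. -/
def IsKSubtree (T : SimpleGraph V) (VT : Set V) (wt : V → V → ℕ) (k : ℕ) (R : Set V) : Prop :=
  R ⊆ VT ∧ R.Nonempty ∧ (T.induce R).Connected ∧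
  ∀ v ∈ R, ∀ w ∈ R, T.Adj v w → wt v w = k

/-- `R` is the vertex set of a maximal `k`-subtree of `(T, wt)`: its edge set is not properly
included in the edge set of another `k`-subtree. -/
def IsMaxKSubtree (T : SimpleGraph V) (VT : Set V) (wt : V → V → ℕ) (k : ℕ) (R : Set V) :
    Prop :=
  IsKSubtree T VT wt k R ∧
  ∀ R', IsKSubtree T VT wt k R' →
    (∀ v ∈ R, ∀ w ∈ R, T.Adj v w → v ∈ R' ∧ w ∈ R') →
    (∀ v ∈ R', ∀ w ∈ R', T.Adj v w → v ∈ R ∧ w ∈ R)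

/-- `v` is a `k`-exit vertex of `(T, wt)`. -/
def IsExitVertex (T : SimpleGraph V) (wt : V → V → ℕ) (k : ℕ) (v : V) : Prop :=
  ∃ w, T.Adj v w ∧ wt v w < k

/-! Twins `v ≠ w` are adjacent, and a biclique containing both is `{v, w}`: a third vertex would
lie in the part of one twin, hence be adjacent to the other twin, hence, as `N[v] = N[w]`, to its
own partmate. Stars are bicliques, so `{v, w}` is a maximal star and a maximal biclique, and it must not be
monochromatic. -/

section Twins

variable {G : SimpleGraph V} {u v w : V}

lemma mem_closedNbhd : u ∈ closedNbhd G v ↔ u = v ∨ G.Adj v u := Iff.rfl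

lemma Twins.symm (h : Twins G v w) : Twins G w v := Eq.symm h

lemma Twins.adj_of_adj (h : Twins G v w) (hu : u ≠ v) (hwu : G.Adj w u) : G.Adj v u :=
  (mem_closedNbhd.1 (h ▸ mem_closedNbhd.2 (Or.inr hwu))).resolve_left hu

lemma Twins.adj (h : Twins G v w) (hvw : v ≠ w) : G.Adj v w :=
  (mem_closedNbhd.1 (h ▸ mem_closedNbhd.2 (Or.inl rfl))).resolve_left hvw.symm

end Twins

section Biclique

variable {G : SimpleGraph V} {S T W : Set V} {v w : V}

lemma IndepSet.singleton (G : SimpleGraph V) (v : V) : IndepSet G {v} := by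
  rintro x rfl y rfl
  exact G.loopless.irrefl _

lemma union_subset_pair_of_twins (hST : ∀ s ∈ S, ∀ t ∈ T, G.Adj s t) (hS : IndepSet G S)
    (hT : IndepSet G T) (htw : Twins G v w) (hv : v ∈ S) (hw : w ∈ T) :
    S ∪ T ⊆ {v, w} := by
  rintro u (hu | hu)
  · by_contra huvw
    have huv : u ≠ v := fun h => huvw (.inl h)
    exact hS v hv u hu (htw.adj_of_adj huv (hST u hu w hw).symm)
  · by_contra huvw
    have huw : u ≠ w := fun h => huvw (.inr h)
    exact hT w hw u hu (htw.symm.adj_of_adj huw (hST v hv u hu))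

lemma IsBiclique.subset_pair_of_twins (hW : IsBiclique G W) (htw : Twins G v w) (hvw : v ≠ w)
    (hv : v ∈ W) (hw : w ∈ W) : W ⊆ {v, w} := by
  obtain ⟨S, T, -, -, -, rfl, hST, hS, hT⟩ := hW
  have hadj := htw.adj hvw
  rcases hv with hvS | hvT <;> rcases hw with hwS | hwT
  · exact absurd hadj (hS v hvS w hwS)
  · exact union_subset_pair_of_twins hST hS hT htw hvS hwT
  · rw [Set.pair_comm]
    exact union_subset_pair_of_twins hST hS hT htw.symm hwS hvT
  · exact absurd hadj (hT v hvT w hwT)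

lemma IsStarC.isBiclique {c : V} (h : IsStarC G c W) : IsBiclique G W := by
  obtain ⟨hc, hne, hadj, hind⟩ := h
  refine ⟨{c}, W \ {c}, Set.singleton_nonempty c, hne, Set.disjoint_sdiff_right, ?_,
    fun s hs => hs ▸ hadj, IndepSet.singleton G c, hind⟩
  rw [Set.singleton_union, Set.insert_sdiff_self_of_mem hc]

lemma IsStar.isBiclique (h : IsStar G W) : IsBiclique G W :=
  h.elim fun _ hc => hc.isBiclique

lemma isStarC_pair (h : G.Adj v w) : IsStarC G v {v, w} := by
  have hvw_diff : ({v, w} : Set V) \ {v} = {w} := Set.pair_sdiff_left h.ne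
  refine ⟨Set.mem_insert v _, ?_, ?_, ?_⟩ <;> rw [hvw_diff]
  · exact Set.singleton_nonempty w
  · rintro u rfl
    exact h
  · exact IndepSet.singleton G w

lemma isMaxStar_pair_of_twins (htw : Twins G v w) (hvw : v ≠ w) : IsMaxStar G {v, w} :=
  ⟨⟨v, isStarC_pair (htw.adj hvw)⟩, fun _ hW' hsub =>
    (hW'.isBiclique.subset_pair_of_twins htw hvw (hsub (.inl rfl)) (hsub (.inr rfl))).antisymm
      hsub⟩

lemma isMaxBiclique_pair_of_twins (htw : Twins G v w) (hvw : v ≠ w) :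
    IsMaxBiclique G {v, w} :=
  ⟨(isStarC_pair (htw.adj hvw)).isBiclique, fun _ hW' hsub =>
    (hW'.subset_pair_of_twins htw hvw (hsub (.inl rfl)) (hsub (.inr rfl))).antisymm hsub⟩

end Biclique

lemma mono_pair {ρ : V → ℕ} {v w : V} (h : ρ v = ρ w) : Mono ρ {v, w} := by
  rintro x (rfl | rfl) y (rfl | rfl) <;> simp [h]

theorem twins_get_distinct_colors_general (G : SimpleGraph V) (v w : V)
    (hvw : v ≠ w) (htwins : Twins G v w) (ρ : V → ℕ) :
    (StarColoring G ρ → ρ v ≠ ρ w) ∧ (BicliqueColoring G ρ → ρ v ≠ ρ w) :=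
  ⟨fun hρ heq => hρ _ (isMaxStar_pair_of_twins htwins hvw) (mono_pair heq),
    fun hρ heq => hρ _ (isMaxBiclique_pair_of_twins htwins hvw) (mono_pair heq)⟩

/-- Twin vertices receive distinct colors in any star `L`-coloring and in any
biclique `L`-coloring. -/
theorem twins_get_distinct_colors (G : SimpleGraph V) (L : V → Set ℕ) (v w : V)
    (hvw : v ≠ w) (htwins : Twins G v w) (ρ : V → ℕ) (hρ : IsLColoring L ρ) :
    (StarColoring G ρ → ρ v ≠ ρ w) ∧ (BicliqueColoring G ρ → ρ v ≠ ρ w) :=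
  twins_get_distinct_colors_general G v w hvw htwins ρ
end

section
/- Let G be a graph and K be a k-keeper connecting v, w ∈ V(G), where k ≥ 2. Then: (i) no induced hole (chordless cycle of length ≥ 4) or induced K_{k+2} of G contains a vertex of K; (ii) ρ(v) = ρ(w) for every star k-coloring ρ of G; and (iii) any k-coloring ρ of G \ K with ρ(v) = ρ(w) can be extended into a k-coloring of G such that no monochromatic maximal star of G contains a vertex of K. -/
variable {V : Type*}

/-- Properties of `k`-keepers. -/
theorem keeper_properties (G : SimpleGraph V) (k : ℕ) (hk : 2 ≤ k) (v w : V) (K : Set V)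
    (hK : IsKeeper G k v w K) :
    ((∀ S : Set V, IsHole G S ∨ IsInducedComplete G (k + 2) S → Disjoint S K) ∧
     (∀ ρ : V → ℕ, StarKColoring G k ρ → ρ v = ρ w) ∧
     (∀ ρ₀ : V → ℕ, (∀ x, x ∉ K → ρ₀ x ∈ Set.Icc 1 k) → ρ₀ v = ρ₀ w →
       ∃ ρ : V → ℕ, (∀ x, ρ x ∈ Set.Icc 1 k) ∧ (∀ x, x ∉ K → ρ x = ρ₀ x) ∧
         ∀ W, IsMaxStar G W → Mono ρ W → Disjoint W K)) := by
  classical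
  obtain ⟨hvK, hwK, d, C, hdinj, hCfin, hdC, hCdisj, hKeq, hcliqD, hcliqC, hloc⟩ := hK
  -- basic membership facts
  have hCK : ∀ i, C i ⊆ K := fun i x hx => hKeq ▸ Or.inr (Set.mem_iUnion.2 ⟨i, hx⟩)
  have hdK : ∀ i, d i ∈ K := fun i => hKeq ▸ Or.inl ⟨i, rfl⟩
  have hBK : ∀ i, insert (d i) (C i) ⊆ K := fun i x hx =>
    hx.elim (fun h => h ▸ hdK i) (fun h => hCK i h)
  have hvC : ∀ i, v ∉ C i := fun i h => hvK (hCK i h)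
  have hwC : ∀ i, w ∉ C i := fun i h => hwK (hCK i h)
  have hvd : ∀ i, v ≠ d i := fun i h => hvK (h ▸ hdK i)
  have hwd : ∀ i, w ≠ d i := fun i h => hwK (h ▸ hdK i)
  -- locality consequences
  have nbrC : ∀ i, ∀ x ∈ C i, ∀ y, G.Adj x y → y ∈ insert (d i) (C i) := by
    intro i x hx y hadj
    rcases hloc x (hCK i hx) y hadj with ⟨⟨j, hj⟩, _⟩ | ⟨j, hxj, hyj⟩
    · exact absurd (hj ▸ hx) (hdC j i)
    · rcases hxj with hxd | hxC
      · exact absurd (hxd ▸ hx) (hdC j i)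
      · have : j = i := by
          by_contra hne
          exact (hCdisj j i hne).ne_of_mem hxC hx rfl
        exact this ▸ hyj
  have nbrD : ∀ i, ∀ y, G.Adj (d i) y → y ∈ (Set.range d ∪ {v, w}) ∪ C i := by
    intro i y hadj
    rcases hloc (d i) (hdK i) y hadj with ⟨_, hy⟩ | ⟨j, hxj, hyj⟩
    · exact Or.inl hy
    · have hji : j = i := by
        rcases hxj with h | h
        · exact hdinj h.symm
        · exact absurd h (hdC i j)
      subst hji
      rcases hyj with h | h
      · exact absurd (h ▸ hadj) (G.irrefl)
      · exact Or.inr h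
  -- clique adjacencies
  have adjB : ∀ i, ∀ x ∈ insert (d i) (C i), ∀ y ∈ insert (d i) (C i), x ≠ y → G.Adj x y :=
    fun i x hx y hy hne => (hcliqC i) hx hy hne
  have adjD : ∀ x ∈ Set.range d ∪ {v, w}, ∀ y ∈ Set.range d ∪ {v, w}, x ≠ y → G.Adj x y :=
    fun x hx y hy hne => hcliqD hx hy hne
  -- non-adjacency: C i vertices have no neighbors outside insert (d i) (C i)
  have nadjCv : ∀ i, ∀ x ∈ C i, ¬G.Adj x v := by
    intro i x hx h
    rcases nbrC i x hx v h with h' | h'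
    · exact hvd i h'
    · exact hvC i h'
  have nadjCw : ∀ i, ∀ x ∈ C i, ¬G.Adj x w := by
    intro i x hx h
    rcases nbrC i x hx w h with h' | h'
    · exact hwd i h'
    · exact hwC i h'
  -- Lemma A : {x, y} with x y distinct in C i is a maximal star
  have nadjDC : ∀ i, ∀ c ∈ C i, ∀ x ∈ Set.range d ∪ {v, w}, x ≠ d i → ¬G.Adj x c := by
    intro i c hc x hx hne h
    rcases nbrC i c hc x h.symm with h' | h'
    · exact hne h'
    · rcases hx with ⟨j, rfl⟩ | hx
      · exact hdC j i h'
      · rcases hx with rfl | rfl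
        · exact hvC i h'
        · exact hwC i h'
  have lemA : ∀ i, ∀ x ∈ C i, ∀ y ∈ C i, x ≠ y → IsMaxStar G ({x, y} : Set V) := by
    intro i x hx y hy hne
    have hadj : G.Adj x y := adjB i x (Set.mem_insert_of_mem _ hx) y (Set.mem_insert_of_mem _ hy) hne
    have hdiff : ({x, y} : Set V) \ {x} = {y} := Set.pair_diff_left hne
    constructor
    · refine ⟨x, Set.mem_insert _ _, ?_, ?_, ?_⟩
      · rw [hdiff]; exact ⟨y, rfl⟩
      · rw [hdiff]; rintro u rfl; exact hadj
      · rw [hdiff]; rintro a rfl b rfl; exact fun h => G.irrefl h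
    · rintro W' ⟨z, hzW, -, hadjz, hind⟩ hsub
      have hxW : x ∈ W' := hsub (Set.mem_insert _ _)
      have hyW : y ∈ W' := hsub (Set.mem_insert_of_mem _ rfl)
      have hz : z = x ∨ z = y := by
        by_contra hc
        push_neg at hc
        exact hind x ⟨hxW, fun h => hc.1 (Set.eq_of_mem_singleton h).symm⟩
          y ⟨hyW, fun h => hc.2 (Set.eq_of_mem_singleton h).symm⟩ hadj
      refine Set.Subset.antisymm ?_ hsub
      intro u huW
      rcases hz with rfl | rfl
      · by_cases hux : u = z
        · exact hux ▸ Set.mem_insert _ _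
        · have huz : u ∈ W' \ {z} := ⟨huW, hux⟩
          have huB : u ∈ insert (d i) (C i) := nbrC i z hx u (hadjz u huz)
          by_cases huy : u = y
          · exact huy ▸ Set.mem_insert_of_mem _ rfl
          · exact absurd (adjB i u huB y (Set.mem_insert_of_mem _ hy) huy)
              (hind u huz y ⟨hyW, hne.symm⟩)
      · by_cases hux : u = z
        · exact hux ▸ Set.mem_insert_of_mem _ rfl
        · have huz : u ∈ W' \ {z} := ⟨huW, hux⟩
          have huB : u ∈ insert (d i) (C i) := nbrC i z hy u (hadjz u huz)
          by_cases huy : u = x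
          · exact huy ▸ Set.mem_insert _ _
          · exact absurd (adjB i u huB x (Set.mem_insert_of_mem _ hx) huy)
              (hind u huz x ⟨hxW, hne⟩)
  -- Lemma B : {d i, x, c} is a maximal star for x ∈ Dvw \ {d i}, c ∈ C i
  have lemB : ∀ i, ∀ c ∈ C i, ∀ x ∈ Set.range d ∪ {v, w}, x ≠ d i →
      IsMaxStar G ({d i, x, c} : Set V) := by
    intro i c hc x hx hxd
    have hdm : d i ∈ Set.range d ∪ {v, w} := Or.inl ⟨i, rfl⟩
    have hxc : x ≠ c := by
      rintro rfl
      rcases hx with ⟨j, rfl⟩ | hx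
      · exact hdC j i hc
      · rcases hx with rfl | rfl
        · exact hvC i hc
        · exact hwC i hc
    have hdc : d i ≠ c := fun h => hdC i i (h ▸ hc)
    have hadjdx : G.Adj (d i) x := adjD _ hdm _ hx (Ne.symm hxd)
    have hadjdc : G.Adj (d i) c := adjB i (d i) (Set.mem_insert _ _) c (Set.mem_insert_of_mem _ hc) hdc
    have hnadjxc : ¬G.Adj x c := nadjDC i c hc x hx hxd
    have hdiff : ({d i, x, c} : Set V) \ {d i} = {x, c} := by
      ext u
      simp only [Set.mem_diff, Set.mem_insert_iff, Set.mem_singleton_iff]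
      constructor
      · rintro ⟨(rfl | h), hne⟩
        · exact absurd rfl hne
        · exact h
      · rintro (rfl | rfl)
        · exact ⟨Or.inr (Or.inl rfl), hxd⟩
        · exact ⟨Or.inr (Or.inr rfl), fun h => hdc h.symm⟩
    constructor
    · refine ⟨d i, Set.mem_insert _ _, ?_, ?_, ?_⟩
      · rw [hdiff]; exact ⟨x, Set.mem_insert _ _⟩
      · rw [hdiff]; rintro u (rfl | rfl)
        exacts [hadjdx, hadjdc]
      · rw [hdiff]; rintro a (rfl | rfl) b (rfl | rfl)
        · exact fun h => G.irrefl h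
        · exact hnadjxc
        · exact fun h => hnadjxc h.symm
        · exact fun h => G.irrefl h
    · rintro W' ⟨z, hzW, -, hadjz, hind⟩ hsub
      have hdW : d i ∈ W' := hsub (Set.mem_insert _ _)
      have hxW : x ∈ W' := hsub (Set.mem_insert_of_mem _ (Set.mem_insert _ _))
      have hcW : c ∈ W' := hsub (Set.mem_insert_of_mem _ (Set.mem_insert_of_mem _ rfl))
      have hz : z = d i := by
        by_contra h1
        have hd' : d i ∈ W' \ {z} := ⟨hdW, by rw [Set.mem_singleton_iff]; exact fun h => h1 h.symm⟩
        by_cases h2 : z = x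
        · have hc' : c ∈ W' \ {z} := ⟨hcW, by rw [Set.mem_singleton_iff, h2]; exact fun h => hxc h.symm⟩
          exact hind (d i) hd' c hc' hadjdc
        · have hx' : x ∈ W' \ {z} := ⟨hxW, by rw [Set.mem_singleton_iff]; exact fun h => h2 h.symm⟩
          exact hind (d i) hd' x hx' hadjdx
      subst hz
      refine Set.Subset.antisymm ?_ hsub
      intro u huW
      by_cases hud : u = d i
      · exact hud ▸ Set.mem_insert _ _
      have huz : u ∈ W' \ {d i} := ⟨huW, hud⟩
      rcases nbrD i u (hadjz u huz) with hu | hu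
      · by_cases hux : u = x
        · exact hux ▸ Set.mem_insert_of_mem _ (Set.mem_insert _ _)
        · exact absurd (adjD u hu x hx hux) (hind u huz x ⟨hxW, fun h => hxd (Set.eq_of_mem_singleton h)⟩)
      · by_cases huc : u = c
        · exact huc ▸ Set.mem_insert_of_mem _ (Set.mem_insert_of_mem _ rfl)
        · exact absurd (adjB i u (Set.mem_insert_of_mem _ hu) c (Set.mem_insert_of_mem _ hc) huc)
            (hind u huz c ⟨hcW, fun h => hdc (Set.eq_of_mem_singleton h).symm⟩)
  refine ⟨?_, ?_, ?_⟩
  · -- Part (i)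
    intro S hS
    rw [Set.disjoint_right]
    intro x hxK hxS
    rcases hS with ⟨n, hn4, f, hfinj, hfrange, hfadj⟩ | ⟨hclq, hSfin, hScard⟩
    · -- hole case
      haveI : NeZero n := ⟨by omega⟩
      have hne0 : ∀ m : ℕ, 0 < m → m < n → (m : ZMod n) ≠ 0 := by
        intro m hm1 hmn h
        rw [ZMod.natCast_eq_zero_iff] at h
        exact absurd (Nat.le_of_dvd hm1 h) (by omega)
      have hadj1 : ∀ t : ZMod n, G.Adj (f t) (f (t + 1)) :=
        fun t => (hfadj t (t + 1)).2 (Or.inl rfl)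
      have hadj2 : ∀ t : ZMod n, G.Adj (f t) (f (t - 1)) :=
        fun t => (hfadj t (t - 1)).2 (Or.inr (by ring))
      have hnadj : ∀ t : ZMod n, ¬G.Adj (f (t - 1)) (f (t + 1)) := by
        intro t h
        rcases (hfadj (t - 1) (t + 1)).1 h with h' | h'
        · have : ((1 : ℕ) : ZMod n) = 0 := by push_cast; linear_combination h'
          exact hne0 1 (by omega) (by omega) this
        · have : ((3 : ℕ) : ZMod n) = 0 := by push_cast; linear_combination -h'
          exact hne0 3 (by omega) (by omega) this
      have hne11 : ∀ t : ZMod n, f (t - 1) ≠ f (t + 1) := by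
        intro t h
        have h2 := hfinj h
        have : ((2 : ℕ) : ZMod n) = 0 := by push_cast; linear_combination -h2
        exact hne0 2 (by omega) (by omega) this
      have hCfree : ∀ i, ∀ t : ZMod n, f t ∉ C i := by
        intro i t ht
        have m1 := nbrC i (f t) ht (f (t + 1)) (hadj1 t)
        have m2 := nbrC i (f t) ht (f (t - 1)) (hadj2 t)
        exact hnadj t (adjB i (f (t - 1)) m2 (f (t + 1)) m1 (hne11 t))
      rw [← hfrange] at hxS
      obtain ⟨t, rfl⟩ := hxS
      rw [hKeq] at hxK
      rcases hxK with ⟨i, hi⟩ | hxC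
      · have m1 : f (t + 1) ∈ Set.range d ∪ {v, w} := by
          rcases nbrD i (f (t + 1)) (hi ▸ hadj1 t) with h | h
          · exact h
          · exact absurd h (hCfree i (t + 1))
        have m2 : f (t - 1) ∈ Set.range d ∪ {v, w} := by
          rcases nbrD i (f (t - 1)) (hi ▸ hadj2 t) with h | h
          · exact h
          · exact absurd h (hCfree i (t - 1))
        exact hnadj t (adjD (f (t - 1)) m2 (f (t + 1)) m1 (hne11 t))
      · obtain ⟨i, hi⟩ := Set.mem_iUnion.1 hxC
        exact hCfree i t hi
    · -- complete case
      have hsub : ∀ i, ∀ c ∈ C i, c ∈ S → False := by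
        intro i c hc hcS
        have hsub' : S ⊆ insert (d i) (C i) := by
          intro y hy
          by_cases hyc : y = c
          · exact hyc ▸ Set.mem_insert_of_mem _ hc
          · exact nbrC i c hc y (hclq hcS hy (fun h => hyc (h.symm)))
        have hle : S.ncard ≤ (insert (d i) (C i)).ncard :=
          Set.ncard_le_ncard hsub' ((hCfin i).1.insert _)
        have : (insert (d i) (C i)).ncard ≤ k + 1 := by
          calc (insert (d i) (C i)).ncard ≤ (C i).ncard + 1 := Set.ncard_insert_le _ _
          _ = k + 1 := by rw [(hCfin i).2]
        omega
      rw [hKeq] at hxK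
      rcases hxK with ⟨i, rfl⟩ | hxC
      · by_cases hSC : ∃ y ∈ S, y ∈ C i
        · obtain ⟨y, hyS, hyC⟩ := hSC
          exact hsub i y hyC hyS
        · push_neg at hSC
          have hsub' : S ⊆ Set.range d ∪ {v, w} := by
            intro y hy
            by_cases hyd : y = d i
            · exact hyd ▸ Or.inl ⟨i, rfl⟩
            · rcases nbrD i y (hclq hxS hy (fun h => hyd h.symm)) with h | h
              · exact h
              · exact absurd h (hSC y hy)
          have hfinD : (Set.range d ∪ {v, w} : Set V).Finite :=
            (Set.finite_range d).union ((Set.finite_singleton w).insert v)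
          have hle : S.ncard ≤ (Set.range d ∪ {v, w}).ncard := Set.ncard_le_ncard hsub' hfinD
          have h1 : (Set.range d).ncard ≤ k - 1 := by
            rw [← Set.image_univ]
            calc (d '' Set.univ).ncard ≤ (Set.univ : Set (Fin (k - 1))).ncard :=
              Set.ncard_image_le Set.finite_univ
            _ = k - 1 := by rw [Set.ncard_univ]; simp
          have h2 : ({v, w} : Set V).ncard ≤ 2 := by
            calc ({v, w} : Set V).ncard ≤ ({w} : Set V).ncard + 1 := Set.ncard_insert_le _ _
            _ ≤ 2 := by rw [Set.ncard_singleton]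
          have h3 : (Set.range d ∪ {v, w}).ncard ≤ (Set.range d).ncard + ({v, w} : Set V).ncard :=
            Set.ncard_union_le _ _
          omega
      · obtain ⟨i, hi⟩ := Set.mem_iUnion.1 hxC
        exact hsub i x hi hxS
  · -- Part (ii)
    rintro ρ ⟨hρk, hρS⟩
    have injC : ∀ i, ∀ x ∈ C i, ∀ y ∈ C i, x ≠ y → ρ x ≠ ρ y := by
      intro i x hx y hy hne hxy
      refine hρS _ (lemA i x hx y hy hne) ?_
      have hmem : ∀ a ∈ ({x, y} : Set V), ρ a = ρ x := by
        rintro a (rfl | rfl)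
        exacts [rfl, hxy.symm]
      intro a ha b hb; rw [hmem a ha, hmem b hb]
    have hmatch : ∀ i, ∃ c ∈ C i, ρ c = ρ (d i) := by
      intro i
      have h1 : ρ '' C i ⊆ Set.Icc 1 k := by rintro - ⟨c, hc, rfl⟩; exact hρk c
      have h2 : (ρ '' C i).ncard = k := by
        rw [Set.ncard_image_of_injOn (fun a ha b hb hab => by
          by_contra hne; exact injC i a ha b hb hne hab), (hCfin i).2]
      have hIcc : (Set.Icc 1 k).ncard = k := by
        rw [← Finset.coe_Icc, Set.ncard_coe_finset]; simp
      have heq : ρ '' C i = Set.Icc 1 k :=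
        Set.eq_of_subset_of_ncard_le h1 (by omega) (Set.finite_Icc _ _)
      have hmem : ρ (d i) ∈ ρ '' C i := heq ▸ hρk (d i)
      obtain ⟨c, hc, hc'⟩ := hmem
      exact ⟨c, hc, hc'⟩
    have hdiff : ∀ i, ∀ x ∈ Set.range d ∪ {v, w}, x ≠ d i → ρ x ≠ ρ (d i) := by
      intro i x hx hxd heq
      obtain ⟨c, hc, hceq⟩ := hmatch i
      refine hρS _ (lemB i c hc x hx hxd) ?_
      have hmem : ∀ a ∈ ({d i, x, c} : Set V), ρ a = ρ (d i) := by
        rintro a (rfl | rfl | rfl)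
        exacts [rfl, heq, hceq]
      intro a ha b hb; rw [hmem a ha, hmem b hb]
    have hinjρd : Function.Injective (fun i => ρ (d i)) := by
      intro i j h
      by_contra hne
      exact hdiff i (d j) (Or.inl ⟨j, rfl⟩) (fun hh => hne (hdinj hh).symm) h.symm
    by_contra hvw
    set T : Set ℕ := Set.range (fun i => ρ (d i)) with hT
    have hTfin : T.Finite := Set.finite_range _
    have hTcard : T.ncard = k - 1 := by
      rw [hT, ← Set.image_univ, Set.ncard_image_of_injective _ hinjρd, Set.ncard_univ]
      simp
    have hvT : ρ v ∉ T := by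
      rintro ⟨i, hi⟩
      exact hdiff i v (Or.inr (Or.inl rfl)) (hvd i) hi.symm
    have hwT : ρ w ∉ T := by
      rintro ⟨i, hi⟩
      exact hdiff i w (Or.inr (Or.inr rfl)) (hwd i) hi.symm
    have hsub : insert (ρ v) (insert (ρ w) T) ⊆ Set.Icc 1 k := by
      rintro a (rfl | rfl | ⟨i, rfl⟩)
      exacts [hρk v, hρk w, hρk (d i)]
    have hc1 : (insert (ρ w) T).ncard = 1 + T.ncard :=
      by rw [Set.ncard_insert_of_notMem hwT hTfin]; omega
    have hc2 : (insert (ρ v) (insert (ρ w) T)).ncard = 2 + T.ncard := by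
      rw [Set.ncard_insert_of_notMem (by
        rintro (h | h)
        · exact hvw h
        · exact hvT h) (hTfin.insert _), hc1]
      omega
    have hIcc : (Set.Icc 1 k).ncard = k := by
      rw [← Finset.coe_Icc, Set.ncard_coe_finset]; simp
    have hle := Set.ncard_le_ncard hsub (Set.finite_Icc _ _)
    omega
  · -- Part (iii)
    intro ρ₀ hρ₀ hvw0
    obtain ⟨hc₀1, hc₀k⟩ := Set.mem_Icc.1 (hρ₀ v hvK)
    set c₀ := ρ₀ v with hc₀def
    set σ : ℕ → ℕ := fun m => if m + 1 < c₀ then m + 1 else m + 2 with hσdef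
    have hσmono : ∀ a b : ℕ, a < b → σ a < σ b := by
      intro a b hab
      rw [hσdef]
      dsimp only
      split_ifs <;> omega
    have hσIcc : ∀ m, m < k - 1 → (1 ≤ σ m ∧ σ m ≤ k) ∧ σ m ≠ c₀ := by
      intro m hm
      rw [hσdef]
      dsimp only
      split_ifs with h <;> omega
    have hcolex : ∀ i : Fin (k - 1), ∃ g : V → ℕ,
        (∀ x ∈ C i, 1 ≤ g x ∧ g x ≤ k) ∧
        (∀ x ∈ C i, ∀ y ∈ C i, x ≠ y → g x ≠ g y) := by
      intro i
      obtain ⟨hfin, hcard⟩ := hCfin i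
      have hcard' : hfin.toFinset.card = k := by
        rw [← Set.ncard_eq_toFinset_card _ hfin]; exact hcard
      refine ⟨fun x => if hx : x ∈ hfin.toFinset then
        ((hfin.toFinset.equivFin ⟨x, hx⟩ : Fin _) : ℕ) + 1 else 0, ?_, ?_⟩
      · intro x hx
        have hx' : x ∈ hfin.toFinset := hfin.mem_toFinset.2 hx
        simp only [dif_pos hx']
        have hlt := (hfin.toFinset.equivFin ⟨x, hx'⟩).isLt
        omega
      · intro x hx y hy hne h
        have hx' : x ∈ hfin.toFinset := hfin.mem_toFinset.2 hx
        have hy' : y ∈ hfin.toFinset := hfin.mem_toFinset.2 hy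
        simp only [dif_pos hx', dif_pos hy'] at h
        have heq : hfin.toFinset.equivFin ⟨x, hx'⟩ = hfin.toFinset.equivFin ⟨y, hy'⟩ :=
          Fin.ext (by omega)
        exact hne (Subtype.mk_eq_mk.1 (hfin.toFinset.equivFin.injective heq))
    choose col colIcc colinj using hcolex
    set ρ : V → ℕ := fun x =>
      if hx : ∃ i, x ∈ C i then col hx.choose x
      else if hd : ∃ i, d i = x then σ (hd.choose : Fin (k - 1)).val
      else ρ₀ x with hρdef
    have ρC : ∀ i, ∀ x ∈ C i, ρ x = col i x := by
      intro i x hx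
      have hex : ∃ j, x ∈ C j := ⟨i, hx⟩
      have hch : hex.choose = i := by
        by_contra hne
        exact (hCdisj _ _ hne).ne_of_mem hex.choose_spec hx rfl
      rw [hρdef]
      dsimp only
      rw [dif_pos hex, hch]
    have ρd : ∀ i, ρ (d i) = σ i.val := by
      intro i
      have hnC : ¬∃ j, d i ∈ C j := fun ⟨j, hj⟩ => hdC i j hj
      have hex : ∃ j, d j = d i := ⟨i, rfl⟩
      have hch : hex.choose = i := hdinj hex.choose_spec
      rw [hρdef]
      dsimp only
      rw [dif_neg hnC, dif_pos hex, hch]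
    have ρoff : ∀ x, x ∉ K → ρ x = ρ₀ x := by
      intro x hx
      have h1 : ¬∃ i, x ∈ C i := fun ⟨i, hi⟩ => hx (hCK i hi)
      have h2 : ¬∃ i, d i = x := fun ⟨i, hi⟩ => hx (hi ▸ hdK i)
      rw [hρdef]
      dsimp only
      rw [dif_neg h1, dif_neg h2]
    have ρIcc : ∀ x, ρ x ∈ Set.Icc 1 k := by
      intro x
      by_cases h1 : ∃ i, x ∈ C i
      · obtain ⟨i, hi⟩ := h1
        rw [ρC i x hi, Set.mem_Icc]
        exact colIcc i x hi
      · by_cases h2 : ∃ i, d i = x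
        · obtain ⟨i, rfl⟩ := h2
          rw [ρd i, Set.mem_Icc]
          exact (hσIcc i.val i.2).1
        · have hx : x ∉ K := by
            rw [hKeq]
            rintro (⟨i, hi⟩ | hC)
            · exact h2 ⟨i, hi⟩
            · obtain ⟨i, hi⟩ := Set.mem_iUnion.1 hC
              exact h1 ⟨i, hi⟩
          rw [ρoff x hx]
          exact hρ₀ x hx
    have ρv : ρ v = c₀ := ρoff v hvK
    have ρw : ρ w = c₀ := (ρoff w hwK).trans hvw0.symm
    have hdc₀ : ∀ i : Fin (k - 1), ρ (d i) ≠ c₀ := by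
      intro i
      rw [ρd i]
      exact (hσIcc i.val i.2).2
    have hdne : ∀ i j : Fin (k - 1), i ≠ j → ρ (d i) ≠ ρ (d j) := by
      intro i j hne h
      rw [ρd i, ρd j] at h
      have hv : (i : ℕ) ≠ (j : ℕ) := fun hh => hne (Fin.ext hh)
      rcases Nat.lt_or_ge i.val j.val with hlt | hge
      · exact absurd h (Nat.ne_of_lt (hσmono _ _ hlt))
      · exact absurd h.symm (Nat.ne_of_lt (hσmono _ _ (lt_of_le_of_ne hge (Ne.symm hv))))
    refine ⟨ρ, ρIcc, ρoff, ?_⟩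
    rintro W ⟨⟨z, hzW, hWne, hadjz, hind⟩, hWmax⟩ hmono
    rw [Set.disjoint_left]
    intro x hxW hxK
    have final : ∀ i, ∀ c ∈ C i, W ⊆ ({d i, c} : Set V) → False := by
      intro i c hc hWsub
      have hsub2 : W ⊆ ({d i, v, c} : Set V) := by
        intro u hu
        rcases hWsub hu with rfl | rfl
        · exact Set.mem_insert _ _
        · exact Set.mem_insert_of_mem _ (Set.mem_insert_of_mem _ rfl)
      have hmax := hWmax _ (lemB i c hc v (Or.inr (Or.inl rfl)) (hvd i)).1 hsub2
      have hvW : v ∈ W := hmax ▸ Set.mem_insert_of_mem _ (Set.mem_insert _ _)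
      rcases hWsub hvW with h | h
      · exact hvd i h
      · exact hvC i (h ▸ hc)
    by_cases hzK : z ∈ K
    · rw [hKeq] at hzK
      rcases hzK with ⟨i, rfl⟩ | hzC
      · -- center is d i
        have hleafC : ∀ u ∈ W \ {d i}, u ∈ C i := by
          intro u hu
          rcases nbrD i u (hadjz u hu) with hD | hC
          · exfalso
            have hcolu : ρ u = ρ (d i) := hmono u hu.1 (d i) hzW
            rcases hD with ⟨j, rfl⟩ | hz
            · have hji : j ≠ i := fun h => hu.2 (by rw [h]; rfl)
              exact hdne j i hji hcolu
            · rcases hz with rfl | rfl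
              · exact hdc₀ i (hcolu.symm.trans ρv)
              · exact hdc₀ i (hcolu.symm.trans ρw)
          · exact hC
        obtain ⟨u0, hu0⟩ := hWne
        have hWsub : W ⊆ ({d i, u0} : Set V) := by
          intro u hu
          by_cases hud : u = d i
          · exact hud ▸ Set.mem_insert _ _
          have h1 : u ∈ W \ {d i} := ⟨hu, hud⟩
          by_cases huu : u = u0
          · exact huu ▸ Set.mem_insert_of_mem _ rfl
          exact absurd (adjB i u (Set.mem_insert_of_mem _ (hleafC u h1)) u0
            (Set.mem_insert_of_mem _ (hleafC u0 hu0)) huu) (hind u h1 u0 hu0)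
        exact final i u0 (hleafC u0 hu0) hWsub
      · -- center z in some C i
        obtain ⟨i, hzC⟩ := Set.mem_iUnion.1 hzC
        obtain ⟨y, hy⟩ := hWne
        have hyB : y ∈ insert (d i) (C i) := nbrC i z hzC y (hadjz y hy)
        have hWsub0 : W ⊆ ({z, y} : Set V) := by
          intro u hu
          by_cases huz : u = z
          · exact huz ▸ Set.mem_insert _ _
          have h1 : u ∈ W \ {z} := ⟨hu, huz⟩
          by_cases huy : u = y
          · exact huy ▸ Set.mem_insert_of_mem _ rfl
          exact absurd (adjB i u (nbrC i z hzC u (hadjz u h1)) y hyB huy)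
            (hind u h1 y hy)
        have hyd : y = d i := by
          rcases hyB with h | h
          · exact h
          · exfalso
            have hne : z ≠ y := fun hh => hy.2 (hh ▸ rfl)
            have : ρ z ≠ ρ y := by
              rw [ρC i z hzC, ρC i y h]
              exact colinj i z hzC y h hne
            exact this (hmono z hzW y hy.1)
        subst hyd
        refine final i z hzC ?_
        intro u hu
        rcases hWsub0 hu with rfl | rfl
        · exact Set.mem_insert_of_mem _ rfl
        · exact Set.mem_insert _ _
    · -- center not in K, so x is a leaf
      have hxz : x ≠ z := fun h => hzK (h ▸ hxK)
      have hxW' : x ∈ W \ {z} := ⟨hxW, hxz⟩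
      have hadjzx : G.Adj z x := hadjz x hxW'
      rw [hKeq] at hxK
      rcases hxK with ⟨i, rfl⟩ | hxC
      · rcases nbrD i z hadjzx.symm with hD | hC
        · rcases hD with ⟨j, rfl⟩ | hz
          · exact hzK (hdK j)
          · have hcol : ρ (d i) = ρ z := hmono (d i) hxW z hzW
            rcases hz with rfl | rfl
            · exact hdc₀ i (hcol.trans ρv)
            · exact hdc₀ i (hcol.trans ρw)
        · exact hzK (hCK i hC)
      · obtain ⟨i, hi⟩ := Set.mem_iUnion.1 hxC
        exact hzK (hBK i (nbrC i x hi z hadjzx.symm))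
end

section
/- Let G be a graph and C be a k-switcher connecting an independent set U ⊂ V(G), where k ≥ 2. Then: (i) |ρ(U)| ≥ 2 for every star k-coloring ρ of G; and (ii) any k-coloring ρ of G \ C in which |ρ(U)| ≥ 2 can be extended into a k-coloring of G such that no monochromatic maximal star of G has its center in C. -/
variable {V : Type*}

/-- Adjacency between `C` and `U` for a switcher. -/
lemma switcher_adj_CU (G : SimpleGraph V) (k : ℕ) (U C : Set V) (hC : IsSwitcher G k U C) :
    ∀ z ∈ C, ∀ u ∈ U, G.Adj z u := by
  obtain ⟨hdisj, -, -, hclique, -⟩ := hC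
  intro z hz u hu
  have hne : z ≠ u := fun h => (Set.disjoint_left.mp hdisj hz (h ▸ hu))
  exact hclique u hu (Set.mem_insert_iff.mpr (Or.inr hz)) (Set.mem_insert _ _) hne

/-- Adjacency inside `C` for a switcher. -/
lemma switcher_adj_CC (G : SimpleGraph V) (k : ℕ) (U C : Set V) (hU : U.Nonempty)
    (hC : IsSwitcher G k U C) : ∀ x ∈ C, ∀ y ∈ C, x ≠ y → G.Adj x y := by
  obtain ⟨u0, hu0⟩ := hU
  intro x hx y hy hxy
  exact hC.2.2.2.1 u0 hu0 (Set.mem_insert_iff.mpr (Or.inr hx))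
    (Set.mem_insert_iff.mpr (Or.inr hy)) hxy

/-- Any pair of distinct vertices of a switcher `C` is a maximal star. -/
lemma switcher_pair_maxstar (G : SimpleGraph V) (k : ℕ) (U C : Set V)
    (hU : U.Nonempty) (hC : IsSwitcher G k U C) {x y : V} (hx : x ∈ C) (hy : y ∈ C)
    (hxy : x ≠ y) : IsMaxStar G {x, y} := by
  have hCC := switcher_adj_CC G k U C hU hC
  have hCU := switcher_adj_CU G k U C hC
  have hedge := hC.2.2.2.2
  constructor
  · refine ⟨x, Set.mem_insert _ _, ?_, ?_, ?_⟩
    · exact ⟨y, ⟨Set.mem_insert_iff.mpr (Or.inr rfl), by simpa using hxy.symm⟩⟩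
    · rintro u ⟨hu, hu'⟩
      rcases hu with rfl | hu
      · exact absurd rfl hu'
      · rcases hu with rfl; exact hCC x hx u hy hxy
    · intro a ha b hb
      have ha' : a = y := by
        rcases ha.1 with rfl | h
        · exact absurd rfl ha.2
        · exact h
      have hb' : b = y := by
        rcases hb.1 with rfl | h
        · exact absurd rfl hb.2
        · exact h
      rw [ha', hb']
      exact G.irrefl
  · rintro W' ⟨v, hvW, -, hadj, hind⟩ hsub
    have hxW : x ∈ W' := hsub (Set.mem_insert _ _)
    have hyW : y ∈ W' := hsub (Set.mem_insert_iff.mpr (Or.inr rfl))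
    -- the center must be x or y
    have hv : v = x ∨ v = y := by
      by_contra h
      push_neg at h
      have hxm : x ∈ W' \ {v} := ⟨hxW, by simpa using (Ne.symm h.1)⟩
      have hym : y ∈ W' \ {v} := ⟨hyW, by simpa using (Ne.symm h.2)⟩
      exact hind x hxm y hym (hCC x hx y hy hxy)
    -- generic argument: center c ∈ C, other element o ∈ C, leaves must be {o}
    have key : ∀ c o : V, c ∈ C → o ∈ C → c ≠ o → v = c → o ∈ W' → W' ⊆ {c, o} := by
      intro c o hcC hoC hco hvc hoW z hz
      by_cases hzc : z = c
      · exact Set.mem_insert_iff.mpr (Or.inl hzc)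
      · have hzm : z ∈ W' \ {v} := ⟨hz, by simpa [hvc] using hzc⟩
        have hadjz : G.Adj c z := hvc ▸ hadj z hzm
        have hzCU : z ∈ C ∪ U := hedge c hcC z hadjz
        by_cases hzo : z = o
        · exact Set.mem_insert_iff.mpr (Or.inr (by simpa using hzo))
        · exfalso
          have hom : o ∈ W' \ {v} := ⟨hoW, by simpa [hvc] using (Ne.symm hco)⟩
          have : ¬G.Adj z o := hind z hzm o hom
          rcases hzCU with hzC | hzU
          · exact this (hCC z hzC o hoC hzo)
          · exact this ((hCU o hoC z hzU).symm)
    rcases hv with rfl | rfl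
    · exact Set.Subset.antisymm (key v y hx hy hxy rfl hyW) hsub
    · have h1 : W' ⊆ {x, v} := by
        rw [Set.pair_comm]; exact key v x hy hx hxy.symm rfl hxW
      exact Set.Subset.antisymm h1 hsub

/-- For a switcher `C` connecting `U` with `U` nontrivial, `{c} ∪ U` is a maximal star for
each `c ∈ C`. -/
lemma switcher_insert_maxstar (G : SimpleGraph V) (k : ℕ) (U C : Set V)
    (hUind : IndepSet G U) (hU : U.Nontrivial) (hC : IsSwitcher G k U C) {c : V}
    (hc : c ∈ C) : IsMaxStar G (insert c U) := by
  have hCU := switcher_adj_CU G k U C hC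
  have hCC := switcher_adj_CC G k U C hU.nonempty hC
  have hedge := hC.2.2.2.2
  have hcU : c ∉ U := fun h => Set.disjoint_left.mp hC.1 hc h
  have hins : insert c U \ {c} = U := Set.insert_diff_self_of_notMem hcU
  obtain ⟨u1, hu1, u2, hu2, h12⟩ := hU
  constructor
  · refine ⟨c, Set.mem_insert _ _, ?_, ?_, ?_⟩
    · rw [hins]; exact ⟨u1, hu1⟩
    · rw [hins]; intro u hu; exact hCU c hc u hu
    · rw [hins]; exact hUind
  · rintro W' ⟨v, hvW, -, hadj, hind⟩ hsub
    have hcW : c ∈ W' := hsub (Set.mem_insert _ _)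
    have hv : v = c := by
      by_contra hvc
      have hcm : c ∈ W' \ {v} := ⟨hcW, by simpa using (Ne.symm hvc)⟩
      obtain ⟨u, hu, huv⟩ : ∃ u ∈ U, u ≠ v := by
        by_cases h : u1 = v
        · exact ⟨u2, hu2, fun hh => h12 (hh ▸ h ▸ rfl)⟩
        · exact ⟨u1, hu1, h⟩
      have hum : u ∈ W' \ {v} := ⟨hsub (Set.mem_insert_iff.mpr (Or.inr hu)), by simpa using huv⟩
      have hcu : c ≠ u := fun h => hcU (h ▸ hu)
      exact hind c hcm u hum (hCU c hc u hu)
    rw [hv] at hadj hind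
    refine Set.Subset.antisymm ?_ hsub
    intro z hz
    by_cases hzc : z = c
    · exact Set.mem_insert_iff.mpr (Or.inl hzc)
    · have hzm : z ∈ W' \ {c} := ⟨hz, by simpa using hzc⟩
      have hadjz : G.Adj c z := hadj z hzm
      rcases hedge c hc z hadjz with hzC | hzU
      · exfalso
        have hu1c : u1 ≠ c := fun h => hcU (h ▸ hu1)
        have hu1m : u1 ∈ W' \ {c} :=
          ⟨hsub (Set.mem_insert_iff.mpr (Or.inr hu1)), by simpa using hu1c⟩
        have hzu1 : z ≠ u1 := fun h => Set.disjoint_left.mp hC.1 hzC (h ▸ hu1)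
        exact hind z hzm u1 hu1m (hCU z hzC u1 hu1)
      · exact Set.mem_insert_iff.mpr (Or.inr hzU)

/-- Properties of `k`-switchers. -/
theorem switcher_properties (G : SimpleGraph V) (k : ℕ) (hk : 2 ≤ k) (U C : Set V)
    (hUind : IndepSet G U) (hU : U.Nontrivial) (hC : IsSwitcher G k U C) :
    ((∀ ρ : V → ℕ, StarKColoring G k ρ → (ρ '' U).Nontrivial) ∧
     (∀ ρ₀ : V → ℕ, (∀ x, x ∉ C → ρ₀ x ∈ Set.Icc 1 k) → (ρ₀ '' U).Nontrivial →
       ∃ ρ : V → ℕ, (∀ x, ρ x ∈ Set.Icc 1 k) ∧ (∀ x, x ∉ C → ρ x = ρ₀ x) ∧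
         ∀ c ∈ C, ∀ W, IsMaxStar G W → IsStarC G c W → ¬Mono ρ W)) := by
  classical
  have hfinC : C.Finite := hC.2.1
  have hcardC : C.ncard = k := hC.2.2.1
  have hIccCard : (Set.Icc 1 k).ncard = k := by
    rw [← Finset.coe_Icc, Set.ncard_coe_finset, Nat.card_Icc]
    omega
  constructor
  · -- Part (i)
    intro ρ hρ
    by_contra hnt
    rw [Set.not_nontrivial_iff] at hnt
    obtain ⟨hrange, hstar⟩ := hρ
    have hinj : Set.InjOn ρ C := by
      intro x hx y hy hxy
      by_contra hne
      refine hstar {x, y} (switcher_pair_maxstar G k U C hU.nonempty hC hx hy hne) ?_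
      intro a ha b hb
      rcases ha with rfl | ha
      · rcases hb with rfl | hb
        · rfl
        · rcases hb with rfl; exact hxy
      · rcases ha with rfl
        rcases hb with rfl | hb
        · exact hxy.symm
        · rcases hb with rfl; rfl
    have himg : ρ '' C = Set.Icc 1 k := by
      refine Set.eq_of_subset_of_ncard_le ?_ ?_ (Set.finite_Icc 1 k)
      · rintro _ ⟨x, _, rfl⟩; exact hrange x
      · rw [Set.ncard_image_of_injOn hinj, hcardC, hIccCard]
    obtain ⟨u1, hu1, u2, hu2, h12⟩ := hU
    have : ρ u1 ∈ ρ '' C := himg ▸ hrange u1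
    obtain ⟨x, hxC, hx⟩ := this
    refine hstar (insert x U) (switcher_insert_maxstar G k U C hUind ⟨u1, hu1, u2, hu2, h12⟩
      hC hxC) ?_
    have hconst : ∀ u ∈ U, ρ u = ρ u1 := fun u hu => hnt ⟨u, hu, rfl⟩ ⟨u1, hu1, rfl⟩
    intro a ha b hb
    have hva : ρ a = ρ u1 := by
      rcases ha with rfl | ha
      · exact hx
      · exact hconst a ha
    have hvb : ρ b = ρ u1 := by
      rcases hb with rfl | hb
      · exact hx
      · exact hconst b hb
    rw [hva, hvb]
  · -- Part (ii)
    intro ρ₀ hρ₀ hnt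
    have hCscard : hfinC.toFinset.card = (Finset.Icc 1 k).card := by
      rw [← Set.ncard_eq_toFinset_card C hfinC, hcardC, Nat.card_Icc]
      omega
    let e := Finset.equivOfCardEq hCscard
    set ρ : V → ℕ := fun x =>
      if h : x ∈ C then (e ⟨x, hfinC.mem_toFinset.mpr h⟩ : ℕ) else ρ₀ x with hρdef
    have hρmem : ∀ x ∈ C, ρ x ∈ Set.Icc 1 k := by
      intro x hx
      have : ρ x = (e ⟨x, hfinC.mem_toFinset.mpr hx⟩ : ℕ) := dif_pos hx
      rw [this]
      have := (e ⟨x, hfinC.mem_toFinset.mpr hx⟩).2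
      rw [Finset.mem_Icc] at this
      exact Set.mem_Icc.mpr this
    have hρoff : ∀ x, x ∉ C → ρ x = ρ₀ x := fun x hx => dif_neg hx
    have hinj : Set.InjOn ρ C := by
      intro x hx y hy hxy
      simp only [hρdef, dif_pos hx, dif_pos hy] at hxy
      have := e.injective (Subtype.ext hxy)
      exact congrArg Subtype.val this
    refine ⟨ρ, ?_, hρoff, ?_⟩
    · intro x
      by_cases hx : x ∈ C
      · exact hρmem x hx
      · rw [hρoff x hx]; exact hρ₀ x hx
    · intro c hcC W hmax hstarC hmono
      obtain ⟨hcW, -, hadj, hind⟩ := hstarC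
      by_cases hCy : ∃ y ∈ W, y ≠ c ∧ y ∈ C
      · obtain ⟨y, hyW, hyc, hyC⟩ := hCy
        exact hyc (hinj hyC hcC (hmono y hyW c hcW))
      · push_neg at hCy
        have hsub : W ⊆ insert c U := by
          intro z hz
          by_cases hzc : z = c
          · exact Set.mem_insert_iff.mpr (Or.inl hzc)
          · have hzm : z ∈ W \ {c} := ⟨hz, by simpa using hzc⟩
            rcases hC.2.2.2.2 c hcC z (hadj z hzm) with hzC | hzU
            · exact absurd hzC (hCy z hz hzc)
            · exact Set.mem_insert_iff.mpr (Or.inr hzU)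
        have hWeq : insert c U = W := by
          refine hmax.2 (insert c U) ?_ hsub
          obtain ⟨u1, hu1, u2, hu2, h12⟩ := hU
          have hcU : c ∉ U := fun h => Set.disjoint_left.mp hC.1 hcC h
          refine ⟨c, Set.mem_insert _ _, ?_, ?_, ?_⟩ <;>
            rw [Set.insert_diff_self_of_notMem hcU]
          · exact ⟨u1, hu1⟩
          · intro u hu; exact switcher_adj_CU G k U C hC c hcC u hu
          · exact hUind
        obtain ⟨a, ⟨u1, hu1, rfl⟩, b, ⟨u2, hu2, rfl⟩, hab⟩ := hnt
        have h1 : u1 ∈ W := hWeq ▸ Set.mem_insert_iff.mpr (Or.inr hu1)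
        have h2 : u2 ∈ W := hWeq ▸ Set.mem_insert_iff.mpr (Or.inr hu2)
        have e1 : ρ u1 = ρ₀ u1 := hρoff u1 (fun h => Set.disjoint_left.mp hC.1 h hu1)
        have e2 : ρ u2 = ρ₀ u2 := hρoff u2 (fun h => Set.disjoint_left.mp hC.1 h hu2)
        exact hab (e1 ▸ e2 ▸ hmono u1 h1 u2 h2)
end

section
/- Let G be a graph, L be a k-list assignment of G, and K be a k-keeper connecting v, w ∈ V(G), where k ≥ 2. Then any L-coloring ρ of G \ (K ∪ {w}) can be extended into an L-coloring of G in such a way that no monochromatic maximal star of G contains a vertex of K. -/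
variable {V : Type*}

lemma greedy_aux {V : Type*} (k : ℕ) (L : V → Set ℕ) (hL : ∀ u, (L u).Finite ∧ (L u).ncard = k)
    (F : Set ℕ) (hF : F.Finite) (S : Finset V) :
    F.ncard + S.card ≤ k → ∃ f : V → ℕ, Set.InjOn f S ∧ ∀ c ∈ S, f c ∈ L c ∧ f c ∉ F := by
  classical
  induction S using Finset.induction_on with
  | empty => exact fun _ => ⟨fun _ => 0, by simp [Set.InjOn], by simp⟩
  | @insert x S hx ih =>
    intro hcard
    rw [Finset.card_insert_of_notMem hx] at hcard
    obtain ⟨f, hinj, hf⟩ := ih (by omega)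
    have hfin : (F ∪ f '' (S : Set V)).Finite := hF.union ((S.finite_toSet).image f)
    have hlt : (F ∪ f '' (S : Set V)).ncard < (L x).ncard := by
      have h1 : (F ∪ f '' (S : Set V)).ncard ≤ F.ncard + (f '' (S : Set V)).ncard :=
        Set.ncard_union_le _ _
      have h2 : (f '' (S : Set V)).ncard ≤ (S : Set V).ncard :=
        Set.ncard_image_le S.finite_toSet
      have h3 : (S : Set V).ncard = S.card := Set.ncard_coe_finset S
      have := (hL x).2
      omega
    have hne : (L x \ (F ∪ f '' (S : Set V))).Nonempty := by
      by_contra h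
      rw [Set.not_nonempty_iff_eq_empty, Set.diff_eq_empty] at h
      have := Set.ncard_le_ncard h hfin
      omega
    obtain ⟨y, hyL, hyF⟩ := hne
    refine ⟨fun u => if u = x then y else f u, ?_, ?_⟩
    · intro a ha b hb heq
      simp only [Finset.coe_insert, Set.mem_insert_iff, Finset.mem_coe] at ha hb
      simp only at heq
      have hmem : ∀ c, c ∈ S → c ≠ x := fun c hc h => hx (h ▸ hc)
      rcases ha with rfl | ha <;> rcases hb with rfl | hb
      · rfl
      · rw [if_pos rfl, if_neg (hmem b hb)] at heq
        exact absurd (Set.mem_union_right F (heq ▸ Set.mem_image_of_mem f hb)) hyF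
      · rw [if_pos rfl, if_neg (hmem a ha)] at heq
        exact absurd (Set.mem_union_right F (heq ▸ Set.mem_image_of_mem f ha)) hyF
      · rw [if_neg (hmem a ha), if_neg (hmem b hb)] at heq
        exact hinj ha hb heq
    · intro c hc
      rcases Finset.mem_insert.mp hc with rfl | hc
      · show (if c = c then y else f c) ∈ L c ∧ (if c = c then y else f c) ∉ F
        rw [if_pos rfl]
        exact ⟨hyL, fun h => hyF (Set.mem_union_left _ h)⟩
      · have hcx : c ≠ x := fun h => hx (h ▸ hc)
        show (if c = x then y else f c) ∈ L c ∧ (if c = x then y else f c) ∉ F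
        rw [if_neg hcx]
        exact hf c hc

/-- List-extension property of `k`-keepers. -/
theorem keeper_choosability (G : SimpleGraph V) (k : ℕ) (hk : 2 ≤ k) (L : V → Set ℕ)
    (hL : IsListAssignment L k) (v w : V) (K : Set V) (hK : IsKeeper G k v w K)
    (ρ₀ : V → ℕ) (hρ₀ : ∀ u, u ∉ K → u ≠ w → ρ₀ u ∈ L u) :
    ∃ ρ : V → ℕ, IsLColoring L ρ ∧ (∀ u, u ∉ K → u ≠ w → ρ u = ρ₀ u) ∧
      ∀ W, IsMaxStar G W → Mono ρ W → Disjoint W K := by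
  classical
  obtain ⟨hvK, hwK, d, C, hdinj, hC, hdC, hCC, hKeq, hclq, hclqC, hedge⟩ := hK
  -- basic membership facts
  have hCK : ∀ i, C i ⊆ K := by
    intro i c hc; rw [hKeq]; exact Or.inr (Set.mem_iUnion.mpr ⟨i, hc⟩)
  have hdK : ∀ i, d i ∈ K := by
    intro i; rw [hKeq]; exact Or.inl ⟨i, rfl⟩
  have hcd_ne : ∀ i, ∀ c ∈ C i, c ≠ d i := fun i c hc h => hdC i i (h ▸ hc)
  have hvd : ∀ i, v ≠ d i := fun i h => hvK (h ▸ hdK i)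
  have hwd : ∀ i, w ≠ d i := fun i h => hwK (h ▸ hdK i)
  have hvC : ∀ i, v ∉ C i := fun i h => hvK (hCK i h)
  have hwC : ∀ i, w ∉ C i := fun i h => hwK (hCK i h)
  have hCne : ∀ i, (C i).Nonempty := fun i =>
    Set.nonempty_of_ncard_ne_zero (by rw [(hC i).2]; omega)
  -- neighborhoods
  have hNc : ∀ i, ∀ c ∈ C i, ∀ y, G.Adj c y → y ∈ insert (d i) (C i) := by
    intro i c hc y hadj
    rcases hedge c (hCK i hc) y hadj with ⟨⟨j, hj⟩, _⟩ | ⟨j, hcj, hyj⟩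
    · exact absurd (hj ▸ hc) (hdC j i)
    · rcases Set.mem_insert_iff.mp hcj with rfl | hcj'
      · exact absurd hc (hdC j i)
      · have hji : j = i := by
          by_contra hne
          exact Set.disjoint_left.mp (hCC j i hne) hcj' hc
        exact hji ▸ hyj
  have hNd : ∀ i, ∀ y, G.Adj (d i) y → y ∈ (Set.range d ∪ {v, w}) ∪ C i := by
    intro i y hadj
    rcases hedge (d i) (hdK i) y hadj with ⟨_, hy⟩ | ⟨j, hdj, hyj⟩
    · exact Or.inl hy
    · rcases Set.mem_insert_iff.mp hdj with hj | hj
      · have hji : j = i := hdinj hj.symm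
        subst hji
        rcases Set.mem_insert_iff.mp hyj with rfl | hy
        · exact Or.inl (Or.inl ⟨j, rfl⟩)
        · exact Or.inr hy
      · exact absurd hj (hdC i j)
  -- adjacency facts
  have hAdj_dv : ∀ i, G.Adj (d i) v :=
    fun i => hclq (Or.inl ⟨i, rfl⟩) (Or.inr (Or.inl rfl)) (Ne.symm (hvd i))
  have hAdj_dw : ∀ i, G.Adj (d i) w :=
    fun i => hclq (Or.inl ⟨i, rfl⟩) (Or.inr (Or.inr rfl)) (Ne.symm (hwd i))
  have hAdj_dc : ∀ i, ∀ c ∈ C i, G.Adj (d i) c :=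
    fun i c hc => hclqC i (Set.mem_insert _ _) (Set.mem_insert_of_mem _ hc)
      (Ne.symm (hcd_ne i c hc))
  have hAdj_cc : ∀ i, ∀ c ∈ C i, ∀ c' ∈ C i, c ≠ c' → G.Adj c c' :=
    fun i c hc c' hc' hne => hclqC i (Set.mem_insert_of_mem _ hc)
      (Set.mem_insert_of_mem _ hc') hne
  have hnAdj_cv : ∀ i, ∀ c ∈ C i, ¬G.Adj c v := by
    intro i c hc h
    rcases Set.mem_insert_iff.mp (hNc i c hc v h) with h1 | h1
    · exact hvd i h1
    · exact hvC i h1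
  -- choose colors for the d i
  have hSd_card : (Finset.univ.image d).card = k - 1 := by
    rw [Finset.card_image_of_injective _ hdinj, Finset.card_univ, Fintype.card_fin]
  obtain ⟨fd, hfdinj, hfd⟩ := greedy_aux k L hL {ρ₀ v} (Set.finite_singleton _)
    (Finset.univ.image d) (by rw [Set.ncard_singleton, hSd_card]; omega)
  set a : Fin (k - 1) → ℕ := fun i => fd (d i) with ha_def
  have hdmem : ∀ i, d i ∈ Finset.univ.image d :=
    fun i => Finset.mem_image_of_mem d (Finset.mem_univ i)
  have hfdL : ∀ i, a i ∈ L (d i) := fun i => (hfd (d i) (hdmem i)).1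
  have hfd_av : ∀ i, a i ≠ ρ₀ v := fun i h => (hfd (d i) (hdmem i)).2 h
  have ha_inj : Function.Injective a := fun i j h =>
    hdinj (hfdinj (Finset.mem_coe.mpr (hdmem i)) (Finset.mem_coe.mpr (hdmem j)) h)
  -- choose the color for w
  have hcw : (L w \ Set.range a).Nonempty := by
    have hrfin : (Set.range a).Finite := Set.finite_range a
    have hrcard : (Set.range a).ncard ≤ k - 1 := by
      rw [← Set.image_univ]
      calc (a '' Set.univ).ncard ≤ (Set.univ : Set (Fin (k - 1))).ncard :=
            Set.ncard_image_le (Set.finite_univ)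
        _ = k - 1 := by rw [Set.ncard_univ, Nat.card_eq_fintype_card, Fintype.card_fin]
    by_contra h
    rw [Set.not_nonempty_iff_eq_empty, Set.diff_eq_empty] at h
    have := Set.ncard_le_ncard h hrfin
    have := (hL w).2
    omega
  obtain ⟨cw, hcwL, hcwa⟩ := hcw
  have hacw : ∀ i, a i ≠ cw := fun i h => hcwa ⟨i, h⟩
  -- choose rainbow colorings for each C i
  choose f hf using fun i : Fin (k - 1) => greedy_aux k L hL ∅ Set.finite_empty
    ((hC i).1.toFinset)
    (by rw [Set.ncard_empty, ← Set.ncard_eq_toFinset_card (C i) (hC i).1, (hC i).2]; omega)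
  have hfinj : ∀ i, ∀ c ∈ C i, ∀ c' ∈ C i, f i c = f i c' → c = c' := by
    intro i c hc c' hc' h
    exact (hf i).1 (Finset.mem_coe.mpr ((hC i).1.mem_toFinset.mpr hc))
      (Finset.mem_coe.mpr ((hC i).1.mem_toFinset.mpr hc')) h
  have hfL : ∀ i, ∀ c ∈ C i, f i c ∈ L c :=
    fun i c hc => ((hf i).2 c ((hC i).1.mem_toFinset.mpr hc)).1
  -- define the coloring
  set ρ : V → ℕ := fun u =>
    if hd : ∃ i, d i = u then a hd.choose
    else if hc : ∃ i, u ∈ C i then f hc.choose u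
    else if u = w then cw else ρ₀ u with hρdef
  have hρd : ∀ i, ρ (d i) = a i := by
    intro i
    have hex : ∃ j, d j = d i := ⟨i, rfl⟩
    simp only [hρdef]
    rw [dif_pos hex]
    exact congrArg a (hdinj hex.choose_spec)
  have hρc : ∀ i, ∀ c ∈ C i, ρ c = f i c := by
    intro i c hc
    have h1 : ¬∃ j, d j = c := fun ⟨j, hj⟩ => hdC j i (hj ▸ hc)
    have hex : ∃ j, c ∈ C j := ⟨i, hc⟩
    simp only [hρdef]
    rw [dif_neg h1, dif_pos hex]
    have hji : hex.choose = i := by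
      by_contra hne
      exact Set.disjoint_left.mp (hCC hex.choose i hne) hex.choose_spec hc
    rw [hji]
  have hρw : ρ w = cw := by
    have h1 : ¬∃ j, d j = w := fun ⟨j, hj⟩ => hwd j hj.symm
    have h2 : ¬∃ j, w ∈ C j := fun ⟨j, hj⟩ => hwC j hj
    simp only [hρdef]
    rw [dif_neg h1, dif_neg h2]
    simp
  have hρout : ∀ u, u ∉ K → u ≠ w → ρ u = ρ₀ u := by
    intro u huK huw
    rw [hKeq] at huK
    have h1 : ¬∃ j, d j = u := fun ⟨j, hj⟩ => huK (Or.inl ⟨j, hj⟩)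
    have h2 : ¬∃ j, u ∈ C j := fun ⟨j, hj⟩ => huK (Or.inr (Set.mem_iUnion.mpr ⟨j, hj⟩))
    simp only [hρdef]
    rw [dif_neg h1, dif_neg h2, if_neg huw]
  -- key color inequalities
  have hadv : ∀ i, ρ (d i) ≠ ρ v := by
    intro i
    rw [hρd]
    by_cases hvw : v = w
    · rw [hvw, hρw]; exact hacw i
    · rw [hρout v hvK hvw]; exact hfd_av i
  have hadw : ∀ i, ρ (d i) ≠ ρ w := by
    intro i; rw [hρd, hρw]; exact hacw i
  have hρC_inj : ∀ i, ∀ c ∈ C i, ∀ c' ∈ C i, ρ c = ρ c' → c = c' := by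
    intro i c hc c' hc' h
    rw [hρc i c hc, hρc i c' hc'] at h
    exact hfinj i c hc c' hc' h
  -- ρ is an L-coloring
  have hcol : IsLColoring L ρ := by
    intro u
    by_cases h1 : ∃ i, d i = u
    · obtain ⟨i, rfl⟩ := h1
      rw [hρd i]; exact hfdL i
    · by_cases h2 : ∃ i, u ∈ C i
      · obtain ⟨i, hu⟩ := h2
        rw [hρc i u hu]; exact hfL i u hu
      · by_cases h3 : u = w
        · subst h3; rw [hρw]; exact hcwL
        · have huK : u ∉ K := by
            rw [hKeq]
            rintro (⟨j, hj⟩ | hU)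
            · exact h1 ⟨j, hj⟩
            · exact h2 (Set.mem_iUnion.mp hU)
          rw [hρout u huK h3]; exact hρ₀ u huK h3
  -- extension argument: W = {d i, c} is never a maximal star
  have hExt : ∀ i, ∀ c ∈ C i, ∀ W, IsMaxStar G W → W = {d i, c} → False := by
    intro i c hc W hmax hWeq
    have hvne_di : v ≠ d i := hvd i
    have hvne_c : v ≠ c := fun h => hvC i (h ▸ hc)
    have hstar : IsStar G (insert v W) := by
      refine ⟨d i, Set.mem_insert_of_mem v (hWeq ▸ Set.mem_insert _ _),
        ⟨v, ⟨Set.mem_insert _ _, hvne_di⟩⟩, ?_, ?_⟩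
      · intro u hu
        obtain ⟨hu1, hu2⟩ := hu
        rcases Set.mem_insert_iff.mp hu1 with rfl | huW
        · exact hAdj_dv i
        · rw [hWeq] at huW
          simp only [Set.mem_insert_iff, Set.mem_singleton_iff] at huW
          rcases huW with rfl | rfl
          · exact absurd rfl hu2
          · exact hAdj_dc i u hc
      · intro x hx y hy
        have hmem : ∀ u, u ∈ insert v W \ {d i} → u = v ∨ u = c := by
          intro u hu
          obtain ⟨hu1, hu2⟩ := hu
          rcases Set.mem_insert_iff.mp hu1 with rfl | huW
          · exact Or.inl rfl
          · rw [hWeq] at huW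
            simp only [Set.mem_insert_iff, Set.mem_singleton_iff] at huW
            rcases huW with rfl | rfl
            · exact absurd rfl hu2
            · exact Or.inr rfl
        rcases hmem x hx with rfl | rfl <;> rcases hmem y hy with rfl | rfl
        · exact G.irrefl
        · exact fun h => hnAdj_cv i y hc h.symm
        · exact hnAdj_cv i x hc
        · exact G.irrefl
    have heq := hmax.2 _ hstar (Set.subset_insert v W)
    have hvW : v ∈ W := heq ▸ Set.mem_insert v W
    rw [hWeq] at hvW
    rcases hvW with rfl | rfl
    · exact hvne_di rfl
    · exact hvne_c rfl
  -- case: center of the star lies in some C i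
  have hZ1 : ∀ i, ∀ W, IsMaxStar G W → Mono ρ W → ∀ z, IsStarC G z W → z ∈ C i → False := by
    intro i W hmax hmono z hstarc hzC
    obtain ⟨hzW, hne, hadj, hind⟩ := hstarc
    have hleaf : ∀ u ∈ W \ {z}, u ∈ insert (d i) (C i) :=
      fun u hu => hNc i z hzC u (hadj u hu)
    by_cases hcc : ∃ u ∈ W \ {z}, u ∈ C i
    · obtain ⟨u, hu, huC⟩ := hcc
      exact hu.2 (hρC_inj i u huC z hzC (hmono u hu.1 z hzW))
    · push_neg at hcc
      have hdiW : W \ {z} = {d i} := by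
        apply Set.Subset.antisymm
        · intro u hu
          rcases Set.mem_insert_iff.mp (hleaf u hu) with rfl | huC
          · exact rfl
          · exact absurd huC (hcc u hu)
        · obtain ⟨u0, hu0⟩ := hne
          have : u0 = d i := by
            rcases Set.mem_insert_iff.mp (hleaf u0 hu0) with rfl | huC
            · rfl
            · exact absurd huC (hcc u0 hu0)
          intro u hu
          rw [Set.mem_singleton_iff] at hu
          exact hu ▸ (this ▸ hu0)
      have hWeq : W = {d i, z} := by
        have h1 : insert z (W \ {z}) = W := by
          rw [Set.insert_diff_singleton, Set.insert_eq_self.mpr hzW]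
        rw [← h1, hdiW, Set.pair_comm]
      exact hExt i z hzC W hmax hWeq
  -- case: center of the star is some d i
  have hZ2 : ∀ i, ∀ W, IsMaxStar G W → Mono ρ W → IsStarC G (d i) W → False := by
    intro i W hmax hmono hstarc
    obtain ⟨hzW, hne, hadj, hind⟩ := hstarc
    have hleaf : ∀ u ∈ W \ {d i}, u ∈ (Set.range d ∪ {v, w}) ∪ C i :=
      fun u hu => hNd i u (hadj u hu)
    by_cases hyy : ∃ u ∈ W \ {d i}, u ∈ Set.range d ∪ {v, w}
    · obtain ⟨y, hy, hy2⟩ := hyy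
      have hmy : ρ y = ρ (d i) := hmono y hy.1 _ hzW
      rcases hy2 with ⟨j, rfl⟩ | hvw'
      · rw [hρd, hρd] at hmy
        exact hy.2 (congrArg d (ha_inj hmy) : d j = d i)
      · rcases hvw' with rfl | rfl
        · exact hadv i hmy.symm
        · exact hadw i hmy.symm
    · push_neg at hyy
      have hallC : ∀ u ∈ W \ {d i}, u ∈ C i :=
        fun u hu => (hleaf u hu).resolve_left (hyy u hu)
      obtain ⟨u0, hu0⟩ := hne
      have hu0C := hallC u0 hu0
      have hWd : W \ {d i} = {u0} := by
        apply Set.Subset.antisymm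
        · intro u hu
          by_contra hne2
          rw [Set.mem_singleton_iff] at hne2
          exact hind u hu u0 hu0 (hAdj_cc i u (hallC u hu) u0 hu0C hne2)
        · intro u hu
          rw [Set.mem_singleton_iff] at hu
          exact hu ▸ hu0
      have hWeq : W = {d i, u0} := by
        have h1 : insert (d i) (W \ {d i}) = W := by
          rw [Set.insert_diff_singleton, Set.insert_eq_self.mpr hzW]
        rw [← h1, hWd]
      exact hExt i u0 hu0C W hmax hWeq
  -- conclusion
  refine ⟨ρ, hcol, hρout, ?_⟩
  intro W hmax hmono
  rw [Set.disjoint_right]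
  intro x hxK hxW
  obtain ⟨z, hstarc⟩ := hmax.1
  rw [hKeq] at hxK
  rcases hxK with ⟨i, rfl⟩ | hxU
  · by_cases hxz : d i = z
    · exact hZ2 i W hmax hmono (hxz ▸ hstarc)
    · have hadj : G.Adj z (d i) := hstarc.2.2.1 _ ⟨hxW, fun hh => hxz hh⟩
      rcases hNd i z hadj.symm with h1 | hzC
      · rcases h1 with ⟨j, rfl⟩ | h2
        · exact hZ2 j W hmax hmono hstarc
        · rcases h2 with rfl | rfl
          · exact hadv i (hmono _ hxW _ hstarc.1)
          · exact hadw i (hmono _ hxW _ hstarc.1)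
      · exact hZ1 i W hmax hmono z hstarc hzC
  · obtain ⟨i, hxC⟩ := Set.mem_iUnion.mp hxU
    by_cases hxz : x = z
    · exact hZ1 i W hmax hmono z hstarc (hxz ▸ hxC)
    · have hadj : G.Adj z x := hstarc.2.2.1 x ⟨hxW, hxz⟩
      rcases Set.mem_insert_iff.mp (hNc i x hxC z hadj.symm) with rfl | hzC
      · exact hZ2 i W hmax hmono hstarc
      · exact hZ1 i W hmax hmono z hstarc hzC
end

section
/- Let G be a graph, L be a k-list assignment of G, and C be a k-switcher connecting an independent set U ⊂ V(G), where k ≥ 2. Then any L-coloring ρ of G \ C in which |ρ(U)| ≥ 2 can be extended into an L-coloring of G in such a way that no monochromatic maximal star of G has its center in C. -/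
variable {V : Type*}

lemma exists_injOn_choice (L : V → Set ℕ) :
    ∀ s : Finset V, (∀ v ∈ s, (L v).Finite ∧ s.card ≤ (L v).ncard) →
    ∃ f : V → ℕ, (∀ v ∈ s, f v ∈ L v) ∧ Set.InjOn f (s : Set V) := by
  classical
  intro s
  induction s using Finset.induction_on with
  | empty => intro _; exact ⟨fun _ => 0, by simp, by simp⟩
  | @insert a s ha ih =>
    intro h
    obtain ⟨f, hf1, hf2⟩ := ih (fun v hv => ⟨(h v (Finset.mem_insert_of_mem hv)).1, by
      have := (h v (Finset.mem_insert_of_mem hv)).2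
      rw [Finset.card_insert_of_notMem ha] at this; omega⟩)
    have hfin : (L a).Finite := (h a (Finset.mem_insert_self a s)).1
    have hcard : s.card + 1 ≤ (L a).ncard := by
      have := (h a (Finset.mem_insert_self a s)).2
      rwa [Finset.card_insert_of_notMem ha] at this
    have himg : (f '' (s : Set V)).ncard ≤ s.card := by
      calc (f '' (s : Set V)).ncard ≤ (s : Set V).ncard :=
            Set.ncard_image_le s.finite_toSet
        _ = s.card := Set.ncard_coe_finset s
    have hnsub : ¬(L a ⊆ f '' (s : Set V)) := by
      intro hsub
      have := Set.ncard_le_ncard hsub (Set.Finite.image f s.finite_toSet)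
      omega
    obtain ⟨c, hcL, hc⟩ := Set.not_subset.mp hnsub
    refine ⟨Function.update f a c, ?_, ?_⟩
    · intro v hv
      rcases Finset.mem_insert.mp hv with rfl | hv2
      · simpa using hcL
      · rw [Function.update_of_ne (by rintro rfl; exact ha hv2)]
        exact hf1 v hv2
    · intro x hx y hy hxy
      simp only [Finset.coe_insert, Set.mem_insert_iff, Finset.mem_coe] at hx hy
      rcases hx with rfl | hx <;> rcases hy with rfl | hy
      · rfl
      · exfalso
        rw [Function.update_self, Function.update_of_ne (by rintro rfl; exact ha hy)] at hxy
        exact hc ⟨y, hy, hxy.symm⟩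
      · exfalso
        rw [Function.update_self, Function.update_of_ne (by rintro rfl; exact ha hx)] at hxy
        exact hc ⟨x, hx, hxy⟩
      · rw [Function.update_of_ne (by rintro rfl; exact ha hx),
          Function.update_of_ne (by rintro rfl; exact ha hy)] at hxy
        exact hf2 hx hy hxy

/-- List-extension property of `k`-switchers. -/
theorem switcher_choosability (G : SimpleGraph V) (k : ℕ) (hk : 2 ≤ k) (L : V → Set ℕ)
    (hL : IsListAssignment L k) (U C : Set V) (hUind : IndepSet G U) (hU : U.Nontrivial)
    (hC : IsSwitcher G k U C) (ρ₀ : V → ℕ) (hρ₀ : ∀ u, u ∉ C → ρ₀ u ∈ L u)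
    (hmono : (ρ₀ '' U).Nontrivial) :
    ∃ ρ : V → ℕ, IsLColoring L ρ ∧ (∀ u, u ∉ C → ρ u = ρ₀ u) ∧
      ∀ c ∈ C, ∀ W, IsMaxStar G W → IsStarC G c W → ¬Mono ρ W := by
  classical
  obtain ⟨hdisj, hCfin, hCcard, hclique, hclosed⟩ := hC
  have hscard : hCfin.toFinset.card = k := by
    rw [← Set.ncard_eq_toFinset_card C hCfin]; exact hCcard
  obtain ⟨f, hf1, hf2⟩ := exists_injOn_choice L hCfin.toFinset (fun v hv =>
    ⟨(hL v).1, by rw [(hL v).2, hscard]⟩)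
  have hf1' : ∀ v ∈ C, f v ∈ L v := fun v hv => hf1 v (hCfin.mem_toFinset.mpr hv)
  have hf2' : Set.InjOn f C := by rwa [hCfin.coe_toFinset] at hf2
  set ρ : V → ℕ := fun v => if v ∈ C then f v else ρ₀ v with hρdef
  have hρC : ∀ v ∈ C, ρ v = f v := fun v hv => by simp [hρdef, hv]
  have hρnC : ∀ v, v ∉ C → ρ v = ρ₀ v := fun v hv => by simp [hρdef, hv]
  refine ⟨ρ, ?_, hρnC, ?_⟩
  · intro v
    by_cases hv : v ∈ C
    · rw [hρC v hv]; exact hf1' v hv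
    · rw [hρnC v hv]; exact hρ₀ v hv
  · intro c hc W hmax hstar hMono
    obtain ⟨hcW, hIne, hadjc, hind⟩ := hstar
    have hnb : ∀ x ∈ W \ {c}, x ∈ C ∨ x ∈ U := fun x hx =>
      hclosed c hc x (hadjc x hx)
    by_cases hcase : ∃ c' ∈ W \ {c}, c' ∈ C
    · obtain ⟨c', hc'W, hc'C⟩ := hcase
      have h1 : ρ c = ρ c' := hMono c hcW c' hc'W.1
      rw [hρC c hc, hρC c' hc'C] at h1
      exact hc'W.2 (hf2' hc'C hc h1.symm)
    · have hsubU : W \ {c} ⊆ U := fun x hx =>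
        (hnb x hx).resolve_left (fun h => hcase ⟨x, hx, h⟩)
      have hUW : U ⊆ W := by
        intro u hu
        by_contra huW
        have hne : c ≠ u := fun h => (Set.disjoint_left.mp hdisj hc) (h ▸ hu)
        have hadj_cu : G.Adj c u :=
          hclique u hu (Set.mem_insert_of_mem _ hc) (Set.mem_insert u C) hne
        have hstar' : IsStarC G c (insert u W) := by
          refine ⟨Set.mem_insert_of_mem _ hcW,
            ⟨u, Set.mem_insert u W, by simp [Ne.symm hne]⟩, ?_, ?_⟩
          · intro x hx
            rcases Set.mem_insert_iff.mp hx.1 with rfl | hxW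
            · exact hadj_cu
            · exact hadjc x ⟨hxW, hx.2⟩
          · have hsub : insert u W \ {c} ⊆ U := by
              intro x hx
              rcases Set.mem_insert_iff.mp hx.1 with rfl | hxW
              · exact hu
              · exact hsubU ⟨hxW, hx.2⟩
            intro x hx y hy
            exact hUind x (hsub hx) y (hsub hy)
        have heq : insert u W = W :=
          hmax.2 (insert u W) ⟨c, hstar'⟩ (Set.subset_insert u W)
        exact huW (heq ▸ Set.mem_insert u W)
      obtain ⟨a, ⟨u₁, hu₁, rfl⟩, b, ⟨u₂, hu₂, rfl⟩, hneq⟩ := hmono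
      have h1 : ρ u₁ = ρ u₂ := hMono u₁ (hUW hu₁) u₂ (hUW hu₂)
      rw [hρnC u₁ (fun h => Set.disjoint_left.mp hdisj h hu₁),
        hρnC u₂ (fun h => Set.disjoint_left.mp hdisj h hu₂)] at h1
      exact hneq h1
end
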